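/- arXiv:2010.05431 — 6 statements merged into one kernel-verified Lean document; each statement's English description precedes it below -/
import Mathlib

section
/- Fix s > 1, an integer N ≥ 1, indices 0 ≤ i_L < i_R ≤ N with i_L + 1 < i_R, and fixed reals x_0 < x_1 < ⋯ < x_{i_L} and x_{i_R} < x_{i_R+1} < ⋯ < x_N with x_{i_L} < x_{i_R}. Then the function ℰ(X) := Σ_{0 ≤ i < j ≤ N} (x_j − x_i)^{−s}, viewed as a function of X = (x_{i_L+1},…,x_{i_R−1}) on the open set S := { X : x_{i_L} < x_{i_L+1} < ⋯ < x_{i_R−1} < x_{i_R} }, has a unique global minimizer X* in S, and X* is the unique point of S at which P_{i_L}(X) = P_{i_L+1}(X) = ⋯ = P_{i_R−1}(X). -/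
open scoped BigOperators

/-- The total repulsion of the cut at `x_k, x_{k+1}`:
`P_k = Σ_{0 ≤ i ≤ k < j ≤ N} (x_j - x_i)^{-s-1}`. -/
noncomputable def repP (s : ℝ) (N : ℕ) (x : ℕ → ℝ) (k : ℕ) : ℝ :=
  ∑ i ∈ Finset.range (k + 1), ∑ j ∈ Finset.Icc (k + 1) N, (x j - x i) ^ (-s - 1)

/-- The energy `ℰ(X) = Σ_{0 ≤ i < j ≤ N} (x_j - x_i)^{-s}`. -/
noncomputable def calE (s : ℝ) (N : ℕ) (x : ℕ → ℝ) : ℝ :=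
  ∑ i ∈ Finset.range (N + 1), ∑ j ∈ Finset.Icc (i + 1) N, (x j - x i) ^ (-s)

/-- The admissible configurations: `y` agrees with the fixed configuration `x`
at indices `i ≤ i_L` and `i ≥ i_R`, and `y_0 < y_1 < ⋯ < y_N`. -/
def admis (N iL iR : ℕ) (x : ℕ → ℝ) (y : ℕ → ℝ) : Prop :=
  (∀ i, i ≤ iL → y i = x i) ∧ (∀ i, iR ≤ i → y i = x i) ∧ (∀ i, i < N → y i < y (i + 1))


/-!
The energy is a sum of the strictly convex functions `r ↦ r ^ (-s)` of the gaps `x_j - x_i`.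
On the convex set of admissible configurations it is therefore strictly convex: two distinct
admissible configurations differ at some free `x_m`, hence in the gap `x_m - x_{i_L}`. A closing
gap sends the energy to `+∞`, so a sublevel set is compact and a minimizer exists; strict
convexity makes it unique. Finally `∂ℰ/∂x_m = -s (P_{m-1} - P_m)`, and for a convex function the
critical points along the admissible directions are exactly the minimizers, so the minimizer is
the unique configuration at which all the cut repulsions `P_{i_L}, …, P_{i_R - 1}` agree.
-/

open Finset Topology

lemma strictConvexOn_rpow_of_neg {c : ℝ} (hc : c < 0) :
    StrictConvexOn ℝ (Set.Ioi 0) fun r : ℝ => r ^ c := by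
  apply StrictMonoOn.strictConvexOn_of_deriv (convex_Ioi 0)
  · exact fun r hr => (Real.continuousAt_rpow_const r c (Or.inl (ne_of_gt hr))).continuousWithinAt
  · rw [interior_Ioi]
    intro a ha b hb hab
    rw [Real.deriv_rpow_const, Real.deriv_rpow_const]
    exact mul_lt_mul_of_neg_left (Real.rpow_lt_rpow_of_neg ha hab (by linarith)) hc

lemma forall_pred_eq_iff {α : Type*} {f : ℕ → α} {a b : ℕ} :
    (∀ m, a < m → m < b → f (m - 1) = f m) ↔
      ∀ k₁ k₂, a ≤ k₁ → k₁ < b → a ≤ k₂ → k₂ < b → f k₁ = f k₂ := by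
  refine ⟨fun h => ?_, fun h m ham hmb => h _ _ (by omega) (by omega) ham.le hmb⟩
  have hconst : ∀ k, a ≤ k → k < b → f k = f a := by
    intro k hak
    induction k, hak using Nat.le_induction with
    | base => exact fun _ => rfl
    | succ k hak ih => exact fun hkb => (h (k + 1) (by omega) hkb).symm.trans (ih (by omega))
  exact fun k₁ k₂ h₁ h₁' h₂ h₂' => (hconst k₁ h₁ h₁').trans (hconst k₂ h₂ h₂').symm

lemma sum_sum_Icc_sub_mul {R : Type*} [CommRing R] (N : ℕ) (d : ℕ → R) (w : ℕ → ℕ → R) :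
    ∑ i ∈ range (N + 1), ∑ j ∈ Icc (i + 1) N, (d j - d i) * w i j =
      ∑ m ∈ range (N + 1), d m * (∑ i ∈ range m, w i m - ∑ j ∈ Icc (m + 1) N, w m j) := by
  simp only [sub_mul, sum_sub_distrib, mul_sub, mul_sum]
  congr 1
  exact sum_comm' fun i j => by simp only [mem_range, mem_Icc]; omega

def pairs (N : ℕ) : Finset (Σ _ : ℕ, ℕ) :=
  (range (N + 1)).sigma fun i => Icc (i + 1) N

lemma mem_pairs {N : ℕ} {p : Σ _ : ℕ, ℕ} : p ∈ pairs N ↔ p.1 < p.2 ∧ p.2 ≤ N := by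
  simp only [pairs, mem_sigma, mem_range, mem_Icc]
  omega

noncomputable def netForce (s : ℝ) (N : ℕ) (y : ℕ → ℝ) (m : ℕ) : ℝ :=
  ∑ i ∈ range m, (y m - y i) ^ (-s - 1) - ∑ j ∈ Icc (m + 1) N, (y j - y m) ^ (-s - 1)

def admisWithGap (N iL iR : ℕ) (x : ℕ → ℝ) (δ : ℝ) : Set (ℕ → ℝ) :=
  {y | (∀ i, i ≤ iL → y i = x i) ∧ (∀ i, iR ≤ i → y i = x i) ∧ ∀ i, i < N → y i + δ ≤ y (i + 1)}

section

variable {s : ℝ} {N iL iR : ℕ} {x y y₀ u : ℕ → ℝ}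

lemma lt_of_forall_lt_add_one (hy : ∀ i, i < N → y i < y (i + 1)) {i j : ℕ} (hij : i < j)
    (hj : j ≤ N) : y i < y j :=
  strictMonoOn_Iic_of_lt_succ (ψ := y) hy (Set.mem_Iic.2 (hij.le.trans hj)) hj hij

lemma lt_of_mem_pairs (hy : ∀ i, i < N → y i < y (i + 1)) {p : Σ _ : ℕ, ℕ}
    (hp : p ∈ pairs N) : y p.1 < y p.2 :=
  lt_of_forall_lt_add_one hy (mem_pairs.1 hp).1 (mem_pairs.1 hp).2

lemma calE_eq_sum_pairs : calE s N y = ∑ p ∈ pairs N, (y p.2 - y p.1) ^ (-s) := by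
  rw [pairs, sum_sigma]
  rfl

lemma rpow_sub_le_calE (hy : ∀ i, i < N → y i < y (i + 1)) {i j : ℕ} (hij : i < j)
    (hj : j ≤ N) : (y j - y i) ^ (-s) ≤ calE s N y := by
  rw [calE_eq_sum_pairs]
  exact single_le_sum (f := fun p : Σ _ : ℕ, ℕ => (y p.2 - y p.1) ^ (-s))
    (fun p hp => Real.rpow_nonneg (sub_pos.2 (lt_of_mem_pairs hy hp)).le _)
    (mem_pairs.2 ⟨hij, hj⟩ : (⟨i, j⟩ : Σ _ : ℕ, ℕ) ∈ pairs N)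

lemma add_le_of_calE_lt_rpow (hs : 0 < s) (hy : ∀ i, i < N → y i < y (i + 1)) {δ : ℝ}
    (hE : calE s N y < δ ^ (-s)) {i : ℕ} (hi : i < N) : y i + δ ≤ y (i + 1) := by
  by_contra! h
  have hgap : 0 < y (i + 1) - y i := sub_pos.2 (hy i hi)
  have := Real.rpow_lt_rpow_of_neg hgap (by linarith) (neg_lt_zero.2 hs)
  linarith [rpow_sub_le_calE (s := s) hy (lt_add_one i) hi]

lemma continuousOn_calE : ContinuousOn (calE s N) {y | ∀ i, i < N → y i < y (i + 1)} := by
  rw [show calE s N = fun y => ∑ p ∈ pairs N, (y p.2 - y p.1) ^ (-s) from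
    funext fun _ => calE_eq_sum_pairs]
  exact continuousOn_finsetSum _ fun p hp => ContinuousOn.rpow_const (by fun_prop)
    fun y hy => Or.inl (sub_pos.2 (lt_of_mem_pairs hy hp)).ne'

lemma isCompact_admisWithGap (hRN : iR ≤ N) {δ : ℝ} (hδ : 0 < δ) :
    IsCompact (admisWithGap N iL iR x δ) := by
  refine IsCompact.of_isClosed_subset
    (isCompact_Icc (a := fun i => min (x i) (x iL)) (b := fun i => max (x i) (x iR))) ?_ ?_
  · simp only [admisWithGap, Set.ofPred_and, Set.ofPred_forall]
    refine .inter ?_ (.inter ?_ ?_) <;> refine isClosed_iInter fun i => isClosed_iInter fun _ => ?_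
    · exact isClosed_eq (continuous_apply i) continuous_const
    · exact isClosed_eq (continuous_apply i) continuous_const
    · exact isClosed_le (by fun_prop) (by fun_prop)
  · rintro y ⟨hL, hR, hgap⟩
    have hy : ∀ i, i < N → y i < y (i + 1) := fun i hi => by linarith [hgap i hi]
    have hbounds : ∀ i, y i = x i ∨ x iL ≤ y i ∧ y i ≤ x iR := fun i => by
      by_cases hi : i ≤ iL ∨ iR ≤ i
      · exact .inl (hi.elim (hL i) (hR i))
      · refine .inr ⟨?_, ?_⟩
        · rw [← hL iL le_rfl]
          exact (lt_of_forall_lt_add_one hy (by omega) (by omega)).le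
        · rw [← hR iR le_rfl]
          exact (lt_of_forall_lt_add_one hy (by omega) hRN).le
    refine ⟨fun i => ?_, fun i => ?_⟩ <;> rcases hbounds i with h | h
    exacts [h ▸ min_le_left _ _, (min_le_right _ _).trans h.1,
      h ▸ le_max_left _ _, h.2.trans (le_max_right _ _)]

lemma exists_admis (hLR : iL < iR) (hxl : ∀ i, i < iL → x i < x (i + 1))
    (hxr : ∀ i, iR ≤ i → i < N → x i < x (i + 1)) (hmid : x iL < x iR) :
    ∃ y, admis N iL iR x y := by
  have hLR' : (iL : ℝ) < iR := by exact_mod_cast hLR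
  let ℓ : ℕ → ℝ := fun i => x iL + (i - iL) * ((x iR - x iL) / (iR - iL))
  have hℓ : StrictMono ℓ := fun i j hij => by
    have : (i : ℝ) < j := by exact_mod_cast hij
    have : 0 < (x iR - x iL) / (iR - iL) := div_pos (by linarith) (by linarith)
    simp only [ℓ]
    nlinarith
  have hℓR : ℓ iR = x iR := by
    simp only [ℓ]
    field_simp [(sub_pos.2 hLR').ne']
    ring
  let y : ℕ → ℝ := fun i => if iL < i ∧ i < iR then ℓ i else x i
  have hyℓ : ∀ i, iL ≤ i → i ≤ iR → y i = ℓ i := fun i hLi hiR => by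
    by_cases h : iL < i ∧ i < iR
    · simp only [y, if_pos h]
    · simp only [y, if_neg h]
      rcases (show i = iL ∨ i = iR by omega) with rfl | rfl
      · simp [ℓ]
      · exact hℓR.symm
  refine ⟨y, fun i hi => if_neg (by omega), fun i hi => if_neg (by omega), fun i hi => ?_⟩
  rcases lt_or_ge i iL with h | h
  · simpa [y, show ¬ iL < i by omega, show ¬ iL < i + 1 by omega] using hxl i h
  rcases lt_or_ge i iR with h' | h'
  · rw [hyℓ i h h'.le, hyℓ (i + 1) (by omega) h']
    exact hℓ (lt_add_one i)
  · simpa [y, show ¬ i < iR by omega, show ¬ i + 1 < iR by omega] using hxr i h' hi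

lemma convex_admis : Convex ℝ {y | admis N iL iR x y} := by
  rintro a ⟨haL, haR, ha⟩ b ⟨hbL, hbR, hb⟩ t u ht hu htu
  refine ⟨fun i hi => ?_, fun i hi => ?_, fun i hi => ?_⟩
  · simp [haL i hi, hbL i hi, ← add_mul, htu]
  · simp [haR i hi, hbR i hi, ← add_mul, htu]
  · simp only [Pi.add_apply, Pi.smul_apply, smul_eq_mul]
    rcases ht.lt_or_eq with ht | rfl
    · nlinarith [ha i hi, mul_le_mul_of_nonneg_left (hb i hi).le hu]
    · rw [zero_add] at htu
      subst htu
      simpa using hb i hi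

lemma combo_sub_combo {a b : ℕ → ℝ} {t u : ℝ} {i j : ℕ} :
    (t • a + u • b) j - (t • a + u • b) i = t • (a j - a i) + u • (b j - b i) := by
  simp only [Pi.add_apply, Pi.smul_apply, smul_eq_mul]
  ring

lemma rpow_combo_sub_le {c : ℝ} (hc : c < 0) {a b : ℕ → ℝ} {i j : ℕ} (ha : a i < a j)
    (hb : b i < b j) {t u : ℝ} (ht : 0 ≤ t) (hu : 0 ≤ u) (htu : t + u = 1) :
    ((t • a + u • b) j - (t • a + u • b) i) ^ c ≤ t * (a j - a i) ^ c + u * (b j - b i) ^ c := by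
  rw [combo_sub_combo]
  exact (strictConvexOn_rpow_of_neg hc).convexOn.2 (sub_pos.2 ha) (sub_pos.2 hb) ht hu htu

lemma rpow_combo_sub_lt {c : ℝ} (hc : c < 0) {a b : ℕ → ℝ} {i j : ℕ} (ha : a i < a j)
    (hb : b i < b j) (hne : a j - a i ≠ b j - b i) {t u : ℝ} (ht : 0 < t) (hu : 0 < u)
    (htu : t + u = 1) :
    ((t • a + u • b) j - (t • a + u • b) i) ^ c < t * (a j - a i) ^ c + u * (b j - b i) ^ c := by
  rw [combo_sub_combo]
  exact (strictConvexOn_rpow_of_neg hc).2 (sub_pos.2 ha) (sub_pos.2 hb) hne ht hu htu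

theorem strictConvexOn_calE (hs : 0 < s) (hRN : iR ≤ N) :
    StrictConvexOn ℝ {y | admis N iL iR x y} (calE s N) := by
  refine ⟨convex_admis, fun a ha b hb hab t u ht hu htu => ?_⟩
  obtain ⟨m, hm⟩ := Function.ne_iff.1 hab
  have hLm : iL < m := lt_of_not_ge fun h => hm ((ha.1 m h).trans (hb.1 m h).symm)
  have hmR : m < iR := lt_of_not_ge fun h => hm ((ha.2.1 m h).trans (hb.2.1 m h).symm)
  have hc : -s < 0 := neg_lt_zero.2 hs
  have hgap : a m - a iL ≠ b m - b iL := by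
    rw [ha.1 iL le_rfl, hb.1 iL le_rfl]
    exact fun h => hm (sub_left_injective h)
  simp only [calE_eq_sum_pairs, smul_eq_mul, mul_sum, ← sum_add_distrib]
  refine sum_lt_sum (fun p hp => rpow_combo_sub_le hc (lt_of_mem_pairs ha.2.2 hp)
    (lt_of_mem_pairs hb.2.2 hp) ht.le hu.le htu)
    ⟨⟨iL, m⟩, mem_pairs.2 ⟨hLm, show m ≤ N by omega⟩, ?_⟩
  exact rpow_combo_sub_lt hc (lt_of_forall_lt_add_one ha.2.2 hLm (by omega))
    (lt_of_forall_lt_add_one hb.2.2 hLm (by omega)) hgap ht hu htu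

lemma netForce_eq_repP_sub {m : ℕ} (hm : 1 ≤ m) (hmN : m ≤ N) :
    netForce s N y m = repP s N y (m - 1) - repP s N y m := by
  obtain ⟨k, rfl⟩ : ∃ k, m = k + 1 := ⟨m - 1, by omega⟩
  simp only [netForce, repP, Nat.add_sub_cancel]
  rw [← insert_Icc_add_one_left_eq_Icc hmN, sum_range_succ _ (k + 1)]
  simp only [sum_insert (show k + 1 ∉ Icc (k + 1 + 1) N by simp), sum_add_distrib]
  ring

theorem hasDerivAt_calE_add_smul (s : ℝ) (hy : ∀ i, i < N → y i < y (i + 1)) (d : ℕ → ℝ) :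
    HasDerivAt (fun t : ℝ => calE s N (y + t • d))
      (-s * ∑ m ∈ range (N + 1), d m * netForce s N y m) 0 := by
  have hpairs : HasDerivAt (fun t : ℝ => calE s N (y + t • d))
      (∑ i ∈ range (N + 1), ∑ j ∈ Icc (i + 1) N, (d j - d i) * (-s * (y j - y i) ^ (-s - 1)))
      0 := by
    refine HasDerivAt.fun_sum fun i _ => HasDerivAt.fun_sum fun j hj => ?_
    have hgap : 0 < y j - y i :=
      sub_pos.2 (lt_of_forall_lt_add_one hy (by simp at hj; omega) (mem_Icc.1 hj).2)
    have hlin : HasDerivAt (fun t : ℝ => (y + t • d) j - (y + t • d) i) (d j - d i) 0 := by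
      have hfun : (fun t : ℝ => (y + t • d) j - (y + t • d) i) =
          fun t => (y j - y i) + id t * (d j - d i) := by
        funext t
        simp only [Pi.add_apply, Pi.smul_apply, smul_eq_mul, id]
        ring
      rw [hfun]
      simpa using ((hasDerivAt_id (0 : ℝ)).mul_const (d j - d i)).const_add (y j - y i)
    have := hlin.rpow_const (p := -s) (by simpa using Or.inl hgap.ne')
    simpa [mul_assoc] using this
  convert hpairs using 1
  rw [sum_sum_Icc_sub_mul, mul_sum]
  refine sum_congr rfl fun m _ => ?_
  simp only [netForce, ← mul_sum]
  ring

lemma eventually_admis_add_smul (hu : admis N iL iR x u) {d : ℕ → ℝ}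
    (hdL : ∀ i, i ≤ iL → d i = 0) (hdR : ∀ i, iR ≤ i → d i = 0) :
    ∀ᶠ t in 𝓝 (0 : ℝ), admis N iL iR x (u + t • d) := by
  have hchain : ∀ᶠ t in 𝓝 (0 : ℝ), ∀ i ∈ Set.Iio N, (u + t • d) i < (u + t • d) (i + 1) :=
    (Filter.eventually_all_finite (Set.finite_Iio N)).2 fun i hi =>
      ContinuousAt.eventually_lt (by fun_prop) (by fun_prop) (by simpa using hu.2.2 i hi)
  filter_upwards [hchain] with t ht
  exact ⟨fun i hi => by simp [hdL i hi, hu.1 i hi], fun i hi => by simp [hdR i hi, hu.2.1 i hi],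
    fun i hi => ht i hi⟩

lemma netForce_eq_zero_of_isMinOn (hs : 0 < s) (hRN : iR ≤ N) (hu : admis N iL iR x u)
    (hmin : IsMinOn (calE s N) {y | admis N iL iR x y} u) {m : ℕ} (hLm : iL < m) (hmR : m < iR) :
    netForce s N u m = 0 := by
  have hloc : IsLocalMin (fun t : ℝ => calE s N (u + t • Pi.single m 1)) 0 := by
    filter_upwards [eventually_admis_add_smul hu (d := Pi.single m 1)
      (fun i hi => Pi.single_eq_of_ne (by omega) _) (fun i hi => Pi.single_eq_of_ne (by omega) _)]
      with t ht
    simpa using hmin ht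
  have h := hloc.hasDerivAt_eq_zero (hasDerivAt_calE_add_smul s hu.2.2 _)
  rw [sum_eq_single_of_mem m (mem_range.2 (by omega)) fun i _ hi => by simp [hi]] at h
  simpa [hs.ne'] using h

lemma isMinOn_of_netForce_eq_zero (hs : 0 < s) (hRN : iR ≤ N) (hu : admis N iL iR x u)
    (hF : ∀ m, iL < m → m < iR → netForce s N u m = 0) :
    IsMinOn (calE s N) {y | admis N iL iR x y} u := by
  intro z hz
  let L : ℝ →ᵃ[ℝ] (ℕ → ℝ) := AffineMap.lineMap u z
  have hline : calE s N ∘ L = fun t : ℝ => calE s N (u + t • (z - u)) :=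
    funext fun t => by simp [L, AffineMap.lineMap_apply_module', add_comm]
  have hder : HasDerivAt (calE s N ∘ L) 0 0 := by
    rw [hline]
    convert hasDerivAt_calE_add_smul s hu.2.2 (z - u) using 1
    refine (mul_eq_zero_of_right _ (sum_eq_zero fun m _ => ?_)).symm
    by_cases hm : iL < m ∧ m < iR
    · rw [hF m hm.1 hm.2, mul_zero]
    · have hfixed : z m = u m := by
        rcases not_and_or.1 hm with h | h
        · rw [hz.1 m (by omega), hu.1 m (by omega)]
        · rw [hz.2.1 m (by omega), hu.2.1 m (by omega)]
      simp [hfixed]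
  have hconv := (strictConvexOn_calE (x := x) (iL := iL) hs hRN).convexOn.comp_affineMap L
  have := hconv.le_slope_of_hasDerivAt (x := 0) (y := 1) (by simpa [L] using hu)
    (by simpa [L] using hz) one_pos hder
  simpa [L, slope, sub_nonneg] using this

theorem isMinOn_calE_iff_repP_eq (hs : 0 < s) (hRN : iR ≤ N) (hu : admis N iL iR x u) :
    IsMinOn (calE s N) {y | admis N iL iR x y} u ↔
      ∀ k₁ k₂, iL ≤ k₁ → k₁ < iR → iL ≤ k₂ → k₂ < iR → repP s N u k₁ = repP s N u k₂ := by
  have hF : (∀ m, iL < m → m < iR → netForce s N u m = 0) ↔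
      ∀ m, iL < m → m < iR → repP s N u (m - 1) = repP s N u m :=
    forall_congr' fun m => imp_congr_right fun hLm => imp_congr_right fun hmR => by
      rw [netForce_eq_repP_sub (by omega) (by omega), sub_eq_zero]
  rw [← forall_pred_eq_iff, ← hF]
  exact ⟨fun hmin m => netForce_eq_zero_of_isMinOn hs hRN hu hmin,
    isMinOn_of_netForce_eq_zero hs hRN hu⟩

theorem exists_isMinOn_calE (hs : 0 < s) (hRN : iR ≤ N) (hy₀ : admis N iL iR x y₀) :
    ∃ y, admis N iL iR x y ∧ IsMinOn (calE s N) {y | admis N iL iR x y} y := by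
  obtain ⟨δ, hδE, hδ⟩ : ∃ δ, calE s N y₀ < δ ^ (-s) ∧ 0 < δ :=
    (((tendsto_rpow_neg_nhdsGT_zero (neg_lt_zero.2 hs)).eventually_gt_atTop _).and
      self_mem_nhdsWithin).exists
  have hgap : ∀ z, admis N iL iR x z → calE s N z ≤ calE s N y₀ → z ∈ admisWithGap N iL iR x δ :=
    fun z hz hzE =>
      ⟨hz.1, hz.2.1, fun i hi => add_le_of_calE_lt_rpow hs hz.2.2 (hzE.trans_lt hδE) hi⟩
  have hcont : ContinuousOn (calE s N) (admisWithGap N iL iR x δ) :=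
    continuousOn_calE.mono fun z hz i hi => (lt_add_of_pos_right _ hδ).trans_le (hz.2.2 i hi)
  obtain ⟨y, hy, hmin⟩ :=
    (isCompact_admisWithGap hRN hδ).exists_isMinOn ⟨y₀, hgap y₀ hy₀ le_rfl⟩ hcont
  refine ⟨y, ⟨hy.1, hy.2.1, fun i hi => (lt_add_of_pos_right _ hδ).trans_le (hy.2.2 i hi)⟩,
    fun z hz => ?_⟩
  rcases le_or_gt (calE s N z) (calE s N y₀) with hzE | hzE
  · exact hmin (hgap z hz hzE)
  · exact (hmin (hgap y₀ hy₀ le_rfl)).trans hzE.le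

end

theorem stmt5_general (s : ℝ) (hs : 1 < s) (N iL iR : ℕ)
    (hLR : iL < iR) (hRN : iR ≤ N)
    (x : ℕ → ℝ)
    (hxl : ∀ i, i < iL → x i < x (i + 1))
    (hxr : ∀ i, iR ≤ i → i < N → x i < x (i + 1))
    (hmid : x iL < x iR) :
    ∃ y : ℕ → ℝ, admis N iL iR x y ∧
      (∀ y', admis N iL iR x y' → calE s N y ≤ calE s N y') ∧
      (∀ y', admis N iL iR x y' →
        (∀ y'', admis N iL iR x y'' → calE s N y' ≤ calE s N y'') → y' = y) ∧
      (∀ k₁ k₂, iL ≤ k₁ → k₁ < iR → iL ≤ k₂ → k₂ < iR →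
        repP s N y k₁ = repP s N y k₂) ∧
      (∀ y', admis N iL iR x y' →
        (∀ k₁ k₂, iL ≤ k₁ → k₁ < iR → iL ≤ k₂ → k₂ < iR →
          repP s N y' k₁ = repP s N y' k₂) → y' = y) := by
  have hs₀ : 0 < s := by linarith
  obtain ⟨y₀, hy₀⟩ := exists_admis (N := N) hLR hxl hxr hmid
  obtain ⟨y, hy, hmin⟩ := exists_isMinOn_calE hs₀ hRN hy₀
  have hconv := strictConvexOn_calE (x := x) (iL := iL) hs₀ hRN
  refine ⟨y, hy, hmin, fun y' hy' hmin' => hconv.eq_of_isMinOn hmin' hmin hy' hy,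
    (isMinOn_calE_iff_repP_eq hs₀ hRN hy).1 hmin, fun y' hy' hrep => ?_⟩
  exact hconv.eq_of_isMinOn ((isMinOn_calE_iff_repP_eq hs₀ hRN hy').2 hrep) hmin hy' hy

theorem stmt5 (s : ℝ) (hs : 1 < s) (N iL iR : ℕ) (hN : 1 ≤ N)
    (hLR : iL < iR) (hLR2 : iL + 1 < iR) (hRN : iR ≤ N)
    (x : ℕ → ℝ)
    (hxl : ∀ i, i < iL → x i < x (i + 1))
    (hxr : ∀ i, iR ≤ i → i < N → x i < x (i + 1))
    (hmid : x iL < x iR) :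
    ∃ y : ℕ → ℝ, admis N iL iR x y ∧
      (∀ y', admis N iL iR x y' → calE s N y ≤ calE s N y') ∧
      (∀ y', admis N iL iR x y' →
        (∀ y'', admis N iL iR x y'' → calE s N y' ≤ calE s N y'') → y' = y) ∧
      (∀ k₁ k₂, iL ≤ k₁ → k₁ < iR → iL ≤ k₂ → k₂ < iR →
        repP s N y k₁ = repP s N y k₂) ∧
      (∀ y', admis N iL iR x y' →
        (∀ k₁ k₂, iL ≤ k₁ → k₁ < iR → iL ≤ k₂ → k₂ < iR →
          repP s N y' k₁ = repP s N y' k₂) → y' = y) :=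
  stmt5_general s hs N iL iR hLR hRN x hxl hxr hmid
end

section
/- Fix s > 1, an integer N ≥ 1, indices 0 ≤ i_L < i_R ≤ N with i_L + 1 < i_R, and fixed reals x_0 < x_1 < ⋯ < x_{i_L} and x_{i_R} < x_{i_R+1} < ⋯ < x_N with x_{i_L} < x_{i_R}. Let X* ∈ S be the unique global minimizer of ℰ(X) := Σ_{0 ≤ i < j ≤ N} (x_j − x_i)^{−s} on the open set S := { X = (x_{i_L+1},…,x_{i_R−1}) : x_{i_L} < x_{i_L+1} < ⋯ < x_{i_R−1} < x_{i_R} }. Then for every X ∈ S one has F_m(X) ≤ F_m(X*), where F_m(X) := min_{i_L ≤ k ≤ i_R−1} P_k(X); i.e., the global maximum of F_m on S is attained at X*. -/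
open scoped BigOperators

/-- `F_m(X) = min_{i_L ≤ k ≤ i_R - 1} P_k(X)`. -/
noncomputable def Fmin (s : ℝ) (N iL iR : ℕ) (y : ℕ → ℝ) : ℝ :=
  sInf {r : ℝ | ∃ k, iL ≤ k ∧ k < iR ∧ r = repP s N y k}


section ScalarLemmas

/-- Strict tangent-line inequality for `r ^ p`, `p < 0`, at base point `a`. -/
lemma tangent_rpow_lt {p a b : ℝ} (hp : p < 0) (ha : 0 < a) (hb : 0 < b) (hab : a ≠ b) :
    a ^ p + p * a ^ (p - 1) * (b - a) < b ^ p := by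
  have hba : 0 < b / a := div_pos hb ha
  have hba1 : b / a ≠ 1 := by
    intro h
    exact hab (by field_simp at h; linarith)
  have hlog : Real.log (b / a) < b / a - 1 := Real.log_lt_sub_one_of_pos hba hba1
  have hexp : Real.log (b / a) * p + 1 ≤ (b / a) ^ p := by
    rw [Real.rpow_def_of_pos hba]
    linarith [Real.add_one_le_exp (Real.log (b / a) * p)]
  have key : 1 + p * (b / a - 1) < (b / a) ^ p := by
    have : p * (b / a - 1) < p * Real.log (b / a) := by
      rcases eq_or_ne (Real.log (b/a)) (b/a - 1) with h | h
      · exact absurd h (ne_of_lt hlog)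
      · exact (mul_lt_mul_left_of_neg hp).mpr hlog
    nlinarith [hexp]
  have hap : (0:ℝ) < a ^ p := Real.rpow_pos_of_pos ha p
  have h2 : a ^ p * (1 + p * (b / a - 1)) < a ^ p * ((b / a) ^ p) :=
    (mul_lt_mul_iff_right₀ hap).mpr key
  have h3 : a ^ p * ((b / a) ^ p) = b ^ p := by
    rw [Real.div_rpow hb.le ha.le]
    field_simp
  have h4 : a ^ (p - 1) = a ^ p / a := by
    rw [Real.rpow_sub ha, Real.rpow_one]
  rw [h3] at h2
  calc a ^ p + p * a ^ (p - 1) * (b - a) = a ^ p * (1 + p * (b / a - 1)) := by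
        rw [h4]; field_simp
    _ < b ^ p := h2

/-- Tangent-line inequality for `r ^ p`, `p < 0` (non-strict). -/
lemma tangent_rpow_le {p a b : ℝ} (hp : p < 0) (ha : 0 < a) (hb : 0 < b) :
    a ^ p + p * a ^ (p - 1) * (b - a) ≤ b ^ p := by
  rcases eq_or_ne a b with rfl | h
  · simp
  · exact (tangent_rpow_lt hp ha hb h).le

/-- Strict midpoint convexity for `r ^ p`, `p < 0`. -/
lemma midpoint_rpow_lt {p a b : ℝ} (hp : p < 0) (ha : 0 < a) (hb : 0 < b) (hab : a ≠ b) :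
    ((a + b) / 2) ^ p < (a ^ p + b ^ p) / 2 := by
  have hcpos : 0 < (a + b) / 2 := by positivity
  have h1 : ((a+b)/2) ^ p + p * ((a+b)/2) ^ (p - 1) * (a - (a+b)/2) < a ^ p :=
    tangent_rpow_lt hp hcpos ha (by intro h; apply hab; linarith)
  have h2 : ((a+b)/2) ^ p + p * ((a+b)/2) ^ (p - 1) * (b - (a+b)/2) < b ^ p :=
    tangent_rpow_lt hp hcpos hb (by intro h; apply hab; linarith)
  nlinarith [h1, h2]

/-- Midpoint convexity for `r ^ p`, `p < 0` (non-strict). -/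
lemma midpoint_rpow_le {p a b : ℝ} (hp : p < 0) (ha : 0 < a) (hb : 0 < b) :
    ((a + b) / 2) ^ p ≤ (a ^ p + b ^ p) / 2 := by
  rcases eq_or_ne a b with rfl | h
  · simp [add_self_div_two]
  · exact (midpoint_rpow_lt hp ha hb h).le

/-- Antitonicity of `r ^ p` in the base, for `p < 0`. -/
lemma rpow_le_rpow_of_base_le {p a b : ℝ} (hp : p < 0) (ha : 0 < a) (hab : a ≤ b) :
    b ^ p ≤ a ^ p := by
  have hb : 0 < b := lt_of_lt_of_le ha hab
  rw [show p = -(-p) by ring, Real.rpow_neg ha.le, Real.rpow_neg hb.le]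
  exact inv_anti₀ (Real.rpow_pos_of_pos ha _)
    (Real.rpow_le_rpow ha.le hab (by linarith))

lemma rpow_lt_rpow_of_base_lt {p a b : ℝ} (hp : p < 0) (ha : 0 < a) (hab : a < b) :
    b ^ p < a ^ p := by
  have hb : 0 < b := lt_trans ha hab
  rw [show p = -(-p) by ring, Real.rpow_neg ha.le, Real.rpow_neg hb.le]
  exact inv_strictAnti₀ (Real.rpow_pos_of_pos ha _)
    (Real.rpow_lt_rpow ha.le hab (by linarith))

end ScalarLemmas

section SlopeLemmas

lemma eventually_lt_of_hasDerivAt_neg {f : ℝ → ℝ} {d : ℝ} (hf : HasDerivAt f d 0) (hd : d < 0) :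
    ∀ᶠ t in nhdsWithin 0 (Set.Ioi 0), f t < f 0 := by
  have h := hasDerivAt_iff_tendsto_slope.mp hf
  have h2 : ∀ᶠ t in nhdsWithin 0 {(0:ℝ)}ᶜ, slope f 0 t < 0 :=
    h.eventually (eventually_lt_nhds hd)
  have hsub : nhdsWithin (0:ℝ) (Set.Ioi 0) ≤ nhdsWithin 0 {(0:ℝ)}ᶜ :=
    nhdsWithin_mono 0 (fun x hx => ne_of_gt hx)
  filter_upwards [hsub h2, self_mem_nhdsWithin] with t ht ht2
  have ht' : (0:ℝ) < t := ht2
  rw [slope_def_field] at ht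
  have := (div_neg_iff).mp (by simpa using ht)
  rcases this with ⟨h1, h2'⟩ | ⟨h1, h2'⟩
  · linarith
  · linarith

lemma eventually_gt_of_hasDerivAt_pos {f : ℝ → ℝ} {d : ℝ} (hf : HasDerivAt f d 0) (hd : 0 < d) :
    ∀ᶠ t in nhdsWithin 0 (Set.Ioi 0), f 0 < f t := by
  have h := hasDerivAt_iff_tendsto_slope.mp hf
  have h2 : ∀ᶠ t in nhdsWithin 0 {(0:ℝ)}ᶜ, 0 < slope f 0 t :=
    h.eventually (eventually_gt_nhds hd)
  have hsub : nhdsWithin (0:ℝ) (Set.Ioi 0) ≤ nhdsWithin 0 {(0:ℝ)}ᶜ :=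
    nhdsWithin_mono 0 (fun x hx => ne_of_gt hx)
  filter_upwards [hsub h2, self_mem_nhdsWithin] with t ht ht2
  have ht' : (0:ℝ) < t := ht2
  rw [slope_def_field] at ht
  have := (div_pos_iff).mp (by simpa using ht)
  rcases this with ⟨h1, h2'⟩ | ⟨h1, h2'⟩
  · linarith
  · linarith

end SlopeLemmas

section AbelLemmas

/-- Abel summation identity. -/
lemma abel_id (a q : ℕ → ℝ) (lo : ℕ) : ∀ k, lo ≤ k →
    ∑ m ∈ Finset.Icc (lo+1) k, a m * (q m - q (m-1))
      = a k * q k - a lo * q lo - ∑ m ∈ Finset.Ico lo k, (a (m+1) - a m) * q m := by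
  intro k hk
  induction k, hk using Nat.le_induction with
  | base => simp [Finset.Icc_eq_empty_of_lt (Nat.lt_succ_self lo)]
  | succ k hk ih =>
    rw [Finset.sum_Icc_succ_top (by omega), Finset.sum_Ico_succ_top (by omega), ih]
    have : (k + 1 - 1) = k := by omega
    rw [this]; ring

lemma telescope_Ico (a : ℕ → ℝ) (lo : ℕ) : ∀ k, lo ≤ k →
    ∑ m ∈ Finset.Ico lo k, (a (m+1) - a m) = a k - a lo := by
  intro k hk
  induction k, hk using Nat.le_induction with
  | base => simp
  | succ k hk ih => rw [Finset.sum_Ico_succ_top (by omega), ih]; ring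

/-- Left Abel bound: increasing weights `a`, `q ≥ c` on `[lo,k]`, `q k = c`. -/
lemma abel_left_nonpos {a q : ℕ → ℝ} {c : ℝ} {lo k : ℕ} (hlk : lo ≤ k)
    (hq : ∀ m, lo ≤ m → m ≤ k → c ≤ q m) (hqk : q k = c)
    (ha0 : 0 < a lo) (hamono : ∀ m, lo ≤ m → m < k → a m < a (m+1)) :
    ∑ m ∈ Finset.Icc (lo+1) k, a m * (q m - q (m-1)) ≤ 0 := by
  rw [abel_id a q lo k hlk, hqk]
  have h1 : a lo * c ≤ a lo * q lo := by
    have := hq lo le_rfl hlk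
    nlinarith
  have h2 : ∑ m ∈ Finset.Ico lo k, (a (m+1) - a m) * c
      ≤ ∑ m ∈ Finset.Ico lo k, (a (m+1) - a m) * q m := by
    apply Finset.sum_le_sum
    intro m hm
    rw [Finset.mem_Ico] at hm
    have h3 : a m < a (m+1) := hamono m hm.1 hm.2
    have h4 : c ≤ q m := hq m hm.1 (le_of_lt hm.2)
    nlinarith
  have h5 : ∑ m ∈ Finset.Ico lo k, (a (m+1) - a m) * c = (a k - a lo) * c := by
    rw [← Finset.sum_mul, telescope_Ico a lo k hlk]
  nlinarith

/-- Left Abel bound, strict version (with a witness `q m > c`). -/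
lemma abel_left_neg {a q : ℕ → ℝ} {c : ℝ} {lo k : ℕ} (hlk : lo ≤ k)
    (hq : ∀ m, lo ≤ m → m ≤ k → c ≤ q m) (hqk : q k = c)
    (ha0 : ∀ m, lo ≤ m → m ≤ k → 0 < a m)
    (hamono : ∀ m, lo ≤ m → m < k → a m < a (m+1))
    (hw : ∃ m, lo ≤ m ∧ m < k ∧ c < q m) :
    ∑ m ∈ Finset.Icc (lo+1) k, a m * (q m - q (m-1)) < 0 := by
  obtain ⟨m₀, hm₀1, hm₀2, hm₀3⟩ := hw
  rw [abel_id a q lo k hlk, hqk]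
  have h1 : a lo * c ≤ a lo * q lo := by
    have := hq lo le_rfl hlk
    nlinarith [ha0 lo le_rfl hlk]
  have h2 : ∑ m ∈ Finset.Ico lo k, (a (m+1) - a m) * c
      < ∑ m ∈ Finset.Ico lo k, (a (m+1) - a m) * q m := by
    apply Finset.sum_lt_sum
    · intro m hm
      rw [Finset.mem_Ico] at hm
      have h3 : a m < a (m+1) := hamono m hm.1 hm.2
      have h4 : c ≤ q m := hq m hm.1 (le_of_lt hm.2)
      nlinarith
    · refine ⟨m₀, Finset.mem_Ico.mpr ⟨hm₀1, hm₀2⟩, ?_⟩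
      have h3 : a m₀ < a (m₀+1) := hamono m₀ hm₀1 hm₀2
      nlinarith
  have h5 : ∑ m ∈ Finset.Ico lo k, (a (m+1) - a m) * c = (a k - a lo) * c := by
    rw [← Finset.sum_mul, telescope_Ico a lo k hlk]
  nlinarith

/-- Right Abel bound: decreasing weights `b`, `q ≥ c` on `[lo,k]`, `q lo = c`. -/
lemma abel_right_nonneg {b q : ℕ → ℝ} {c : ℝ} {lo k : ℕ} (hlk : lo ≤ k)
    (hq : ∀ m, lo ≤ m → m ≤ k → c ≤ q m) (hqlo : q lo = c)
    (hb0 : 0 < b k) (hbmono : ∀ m, lo < m → m < k → b (m+1) < b m) :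
    0 ≤ ∑ m ∈ Finset.Icc (lo+1) k, b m * (q m - q (m-1)) := by
  rw [abel_id b q lo k hlk, hqlo]
  have h1 : b k * c ≤ b k * q k := by
    have := hq k hlk le_rfl
    nlinarith
  have h2 : ∑ m ∈ Finset.Ico lo k, (b (m+1) - b m) * q m
      ≤ ∑ m ∈ Finset.Ico lo k, (b (m+1) - b m) * c := by
    apply Finset.sum_le_sum
    intro m hm
    rw [Finset.mem_Ico] at hm
    rcases eq_or_lt_of_le hm.1 with rfl | hlo
    · rw [hqlo]
    · have h3 : b (m+1) < b m := hbmono m hlo hm.2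
      have h4 : c ≤ q m := hq m hm.1 (le_of_lt hm.2)
      nlinarith
  have h5 : ∑ m ∈ Finset.Ico lo k, (b (m+1) - b m) * c = (b k - b lo) * c := by
    rw [← Finset.sum_mul, telescope_Ico b lo k hlk]
  nlinarith

/-- Right Abel bound, strict version. -/
lemma abel_right_pos {b q : ℕ → ℝ} {c : ℝ} {lo k : ℕ} (hlk : lo ≤ k)
    (hq : ∀ m, lo ≤ m → m ≤ k → c ≤ q m) (hqlo : q lo = c)
    (hb0 : 0 < b k)
    (hbmono : ∀ m, lo < m → m < k → b (m+1) < b m)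
    (hw : ∃ m, lo < m ∧ m ≤ k ∧ c < q m) :
    0 < ∑ m ∈ Finset.Icc (lo+1) k, b m * (q m - q (m-1)) := by
  obtain ⟨m₀, hm₀1, hm₀2, hm₀3⟩ := hw
  rw [abel_id b q lo k hlk, hqlo]
  rcases eq_or_ne m₀ k with rfl | hne
  · -- witness at the top endpoint
    have h1 : b m₀ * c < b m₀ * q m₀ := by nlinarith
    have h2 : ∑ m ∈ Finset.Ico lo m₀, (b (m+1) - b m) * q m
        ≤ ∑ m ∈ Finset.Ico lo m₀, (b (m+1) - b m) * c := by
      apply Finset.sum_le_sum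
      intro m hm
      rw [Finset.mem_Ico] at hm
      rcases eq_or_lt_of_le hm.1 with rfl | hlo
      · rw [hqlo]
      · have h3 : b (m+1) < b m := hbmono m hlo hm.2
        have h4 : c ≤ q m := hq m hm.1 (le_of_lt hm.2)
        nlinarith
    have h5 : ∑ m ∈ Finset.Ico lo m₀, (b (m+1) - b m) * c = (b m₀ - b lo) * c := by
      rw [← Finset.sum_mul, telescope_Ico b lo m₀ hlk]
    nlinarith
  · have hm₀2' : m₀ < k := lt_of_le_of_ne hm₀2 hne
    have h1 : b k * c ≤ b k * q k := by
      have := hq k hlk le_rfl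
      nlinarith
    have h2 : ∑ m ∈ Finset.Ico lo k, (b (m+1) - b m) * q m
        < ∑ m ∈ Finset.Ico lo k, (b (m+1) - b m) * c := by
      apply Finset.sum_lt_sum
      · intro m hm
        rw [Finset.mem_Ico] at hm
        rcases eq_or_lt_of_le hm.1 with rfl | hlo
        · rw [hqlo]
        · have h3 : b (m+1) < b m := hbmono m hlo hm.2
          have h4 : c ≤ q m := hq m hm.1 (le_of_lt hm.2)
          nlinarith
      · refine ⟨m₀, Finset.mem_Ico.mpr ⟨le_of_lt hm₀1, hm₀2'⟩, ?_⟩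
        have h3 : b (m₀+1) < b m₀ := hbmono m₀ hm₀1 hm₀2'
        nlinarith
    have h5 : ∑ m ∈ Finset.Ico lo k, (b (m+1) - b m) * c = (b k - b lo) * c := by
      rw [← Finset.sum_mul, telescope_Ico b lo k hlk]
    nlinarith

end AbelLemmas

section Regroup

variable {iL iR N : ℕ}

/-- Restrict a weighted sum to the support window of `v`. -/
lemma sum_support_window (T : Finset ℕ) (G v : ℕ → ℝ)
    (hv : ∀ m, v m ≠ 0 → m ∈ Finset.Ioo iL iR) :
    ∑ j ∈ T, G j * v j = ∑ m ∈ Finset.Ioo iL iR, (if m ∈ T then G m * v m else 0) := by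
  rw [Finset.sum_ite_mem]
  rw [← Finset.sum_filter_of_ne (f := fun j => G j * v j) (p := fun j => j ∈ Finset.Ioo iL iR)]
  · rw [Finset.filter_mem_eq_inter, Finset.inter_comm]
  · intro j _ hne
    apply hv
    intro h0
    apply hne; rw [h0, mul_zero]

lemma regroup_rect (F : ℕ → ℕ → ℝ) (v : ℕ → ℝ) (k : ℕ) (hk2 : k < iR) (hR : iR ≤ N)
    (hv : ∀ m, v m ≠ 0 → m ∈ Finset.Ioo iL iR) :
    ∑ i ∈ Finset.range (k+1), ∑ j ∈ Finset.Icc (k+1) N, F i j * (v j - v i)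
      = ∑ m ∈ Finset.Ioo iL iR, v m *
          ((if k < m then ∑ i ∈ Finset.range (k+1), F i m else 0)
            - (if m ≤ k then ∑ j ∈ Finset.Icc (k+1) N, F m j else 0)) := by
  have step1 : ∑ i ∈ Finset.range (k+1), ∑ j ∈ Finset.Icc (k+1) N, F i j * (v j - v i)
      = (∑ j ∈ Finset.Icc (k+1) N, (∑ i ∈ Finset.range (k+1), F i j) * v j)
        - (∑ i ∈ Finset.range (k+1), (∑ j ∈ Finset.Icc (k+1) N, F i j) * v i) := by
    have e1 : ∀ i, ∑ j ∈ Finset.Icc (k+1) N, F i j * (v j - v i)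
        = (∑ j ∈ Finset.Icc (k+1) N, F i j * v j)
          - (∑ j ∈ Finset.Icc (k+1) N, F i j) * v i := by
      intro i
      rw [Finset.sum_mul, ← Finset.sum_sub_distrib]
      apply Finset.sum_congr rfl; intro j _; ring
    simp only [e1]
    rw [Finset.sum_sub_distrib]
    congr 1
    rw [Finset.sum_comm]
    apply Finset.sum_congr rfl; intro j _
    rw [Finset.sum_mul]
  rw [step1]
  rw [sum_support_window (iL := iL) (iR := iR) _ _ _ hv]
  rw [sum_support_window (iL := iL) (iR := iR) _ _ _ hv]
  rw [← Finset.sum_sub_distrib]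
  apply Finset.sum_congr rfl
  intro m hm
  rw [Finset.mem_Ioo] at hm
  by_cases h1 : k < m
  · rw [if_pos (show m ∈ Finset.Icc (k+1) N from Finset.mem_Icc.mpr (by omega)),
      if_neg (show m ∉ Finset.range (k+1) from fun hc => by
        rw [Finset.mem_range] at hc; omega),
      if_pos h1, if_neg (show ¬ m ≤ k by omega)]
    ring
  · rw [if_neg (show m ∉ Finset.Icc (k+1) N from fun hc => by
        rw [Finset.mem_Icc] at hc; omega),
      if_pos (show m ∈ Finset.range (k+1) from Finset.mem_range.mpr (by omega)),
      if_neg h1, if_pos (show m ≤ k by omega)]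
    ring

lemma regroup_tri (F : ℕ → ℕ → ℝ) (v : ℕ → ℝ) (hR : iR ≤ N)
    (hv : ∀ m, v m ≠ 0 → m ∈ Finset.Ioo iL iR) :
    ∑ i ∈ Finset.range (N+1), ∑ j ∈ Finset.Icc (i+1) N, F i j * (v j - v i)
      = ∑ m ∈ Finset.Ioo iL iR, v m *
          ((∑ i ∈ Finset.range m, F i m) - (∑ j ∈ Finset.Icc (m+1) N, F m j)) := by
  have hIcc : ∀ i : ℕ, Finset.Icc (i+1) N = (Finset.range (N+1)).filter (fun j => i < j) := by
    intro i; ext a; simp only [Finset.mem_Icc, Finset.mem_filter, Finset.mem_range]; omega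
  have step1 : ∑ i ∈ Finset.range (N+1), ∑ j ∈ Finset.Icc (i+1) N, F i j * (v j - v i)
      = (∑ i ∈ Finset.range (N+1), ∑ j ∈ Finset.range (N+1),
          if i < j then F i j * v j else 0)
        - (∑ i ∈ Finset.range (N+1), (∑ j ∈ Finset.Icc (i+1) N, F i j) * v i) := by
    have e1 : ∀ i, ∑ j ∈ Finset.Icc (i+1) N, F i j * (v j - v i)
        = (∑ j ∈ Finset.range (N+1), if i < j then F i j * v j else 0)
          - (∑ j ∈ Finset.Icc (i+1) N, F i j) * v i := by
      intro i
      rw [hIcc i, Finset.sum_filter, Finset.sum_filter, Finset.sum_mul,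
        ← Finset.sum_sub_distrib]
      apply Finset.sum_congr rfl; intro j _
      split_ifs <;> ring
    simp only [e1]
    rw [Finset.sum_sub_distrib]
  rw [step1]
  have step2 : (∑ i ∈ Finset.range (N+1), ∑ j ∈ Finset.range (N+1),
          if i < j then F i j * v j else 0)
      = ∑ j ∈ Finset.range (N+1), (∑ i ∈ Finset.range j, F i j) * v j := by
    rw [Finset.sum_comm]
    apply Finset.sum_congr rfl; intro j hj
    rw [Finset.mem_range] at hj
    rw [Finset.sum_mul, ← Finset.sum_filter]
    have : (Finset.range (N+1)).filter (fun i => i < j) = Finset.range j := by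
      ext a; simp only [Finset.mem_filter, Finset.mem_range]; omega
    rw [this]
  rw [step2]
  rw [sum_support_window (iL := iL) (iR := iR) _ _ _ hv]
  rw [sum_support_window (iL := iL) (iR := iR) _ _ _ hv]
  rw [← Finset.sum_sub_distrib]
  apply Finset.sum_congr rfl
  intro m hm
  rw [Finset.mem_Ioo] at hm
  rw [if_pos (show m ∈ Finset.range (N+1) from Finset.mem_range.mpr (by omega)),
    if_pos (show m ∈ Finset.range (N+1) from Finset.mem_range.mpr (by omega))]
  ring

end Regroup

section RepPDiff

lemma repP_succ_sub (s : ℝ) (N : ℕ) (w : ℕ → ℝ) (k : ℕ) (hk : k + 1 ≤ N) :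
    repP s N w (k+1) - repP s N w k
      = ∑ j ∈ Finset.Icc (k+2) N, (w j - w (k+1)) ^ (-s-1)
        - ∑ i ∈ Finset.range (k+1), (w (k+1) - w i) ^ (-s-1) := by
  have hins : Finset.Icc (k+1) N = insert (k+1) (Finset.Icc (k+2) N) := by
    ext a; simp only [Finset.mem_Icc, Finset.mem_insert]; omega
  have hnotmem : (k+1) ∉ Finset.Icc (k+2) N := by simp
  have h1 : repP s N w (k+1)
      = (∑ i ∈ Finset.range (k+1), ∑ j ∈ Finset.Icc (k+2) N, (w j - w i) ^ (-s-1))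
        + ∑ j ∈ Finset.Icc (k+2) N, (w j - w (k+1)) ^ (-s-1) := by
    rw [repP, Finset.sum_range_succ]
  have h2 : repP s N w k
      = (∑ i ∈ Finset.range (k+1), ∑ j ∈ Finset.Icc (k+2) N, (w j - w i) ^ (-s-1))
        + ∑ i ∈ Finset.range (k+1), (w (k+1) - w i) ^ (-s-1) := by
    have inner : ∀ i : ℕ, ∑ j ∈ Finset.Icc (k+1) N, (w j - w i) ^ (-s-1)
        = (w (k+1) - w i) ^ (-s-1) + ∑ j ∈ Finset.Icc (k+2) N, (w j - w i) ^ (-s-1) :=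
      fun i => by rw [hins, Finset.sum_insert hnotmem]
    rw [repP]
    simp only [inner]
    rw [Finset.sum_add_distrib]
    ring
  rw [h1, h2]; ring

end RepPDiff

section DerivLemmas

lemma hasDerivAt_pair (p wi wj vi vj : ℝ) (h : 0 < wj - wi) :
    HasDerivAt (fun t => (wj + t * vj - (wi + t * vi)) ^ p)
      ((vj - vi) * p * (wj - wi) ^ (p-1)) 0 := by
  have hb : HasDerivAt (fun t : ℝ => wj + t * vj - (wi + t * vi)) (1 * vj - 1 * vi) 0 :=
    (((hasDerivAt_id (0:ℝ)).mul_const vj).const_add wj).sub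
      (((hasDerivAt_id (0:ℝ)).mul_const vi).const_add wi)
  have hne : (fun t : ℝ => wj + t * vj - (wi + t * vi)) 0 ≠ 0 := by
    simp only [zero_mul, add_zero]; exact ne_of_gt h
  have h2 := hb.rpow_const (p := p) (Or.inl hne)
  simp only [zero_mul, add_zero, one_mul] at h2
  exact h2

lemma hasDerivAt_calE (s : ℝ) (N : ℕ) (w v : ℕ → ℝ)
    (hw : ∀ i j, i < j → j ≤ N → w i < w j) :
    HasDerivAt (fun t => calE s N (fun i => w i + t * v i))
      (∑ i ∈ Finset.range (N+1), ∑ j ∈ Finset.Icc (i+1) N,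
        ((v j - v i) * (-s) * (w j - w i) ^ (-s-1))) 0 := by
  simp only [calE]
  apply HasDerivAt.fun_sum
  intro i _
  apply HasDerivAt.fun_sum
  intro j hj
  rw [Finset.mem_Icc] at hj
  have h : 0 < w j - w i := sub_pos.mpr (hw i j (by omega) hj.2)
  exact hasDerivAt_pair (-s) (w i) (w j) (v i) (v j) h

lemma hasDerivAt_repP (s : ℝ) (N : ℕ) (w v : ℕ → ℝ) (k : ℕ) (hkN : k < N)
    (hw : ∀ i j, i < j → j ≤ N → w i < w j) :
    HasDerivAt (fun t => repP s N (fun i => w i + t * v i) k)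
      (∑ i ∈ Finset.range (k+1), ∑ j ∈ Finset.Icc (k+1) N,
        ((v j - v i) * (-s-1) * (w j - w i) ^ (-s-2))) 0 := by
  simp only [repP]
  simp only [show (-s-2 : ℝ) = -s-1-1 from by ring]
  apply HasDerivAt.fun_sum
  intro i hi
  apply HasDerivAt.fun_sum
  intro j hj
  rw [Finset.mem_Icc] at hj
  rw [Finset.mem_range] at hi
  have h : 0 < w j - w i := sub_pos.mpr (hw i j (by omega) hj.2)
  exact hasDerivAt_pair (-s-1) (w i) (w j) (v i) (v j) h

end DerivLemmas

section ContLemmas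

lemma continuousOn_calE_s6 (s : ℝ) (N : ℕ) (A : Set (ℕ → ℝ))
    (hA : ∀ w ∈ A, ∀ i j, i < j → j ≤ N → w i < w j) :
    ContinuousOn (calE s N) A := by
  apply continuousOn_finset_sum
  intro i _
  apply continuousOn_finset_sum
  intro j hj
  rw [Finset.mem_Icc] at hj
  apply ContinuousOn.rpow_const
  · exact ((continuous_apply j).continuousOn).sub ((continuous_apply i).continuousOn)
  · intro w hw
    exact Or.inl (ne_of_gt (sub_pos.mpr (hA w hw i j (by omega) hj.2)))

lemma continuousOn_repP (s : ℝ) (N : ℕ) (k : ℕ) (A : Set (ℕ → ℝ))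
    (hA : ∀ w ∈ A, ∀ i j, i < j → j ≤ N → w i < w j) :
    ContinuousOn (fun w => repP s N w k) A := by
  apply continuousOn_finset_sum
  intro i hi
  apply continuousOn_finset_sum
  intro j hj
  rw [Finset.mem_Icc] at hj
  rw [Finset.mem_range] at hi
  apply ContinuousOn.rpow_const
  · exact ((continuous_apply j).continuousOn).sub ((continuous_apply i).continuousOn)
  · intro w hw
    exact Or.inl (ne_of_gt (sub_pos.mpr (hA w hw i j (by omega) hj.2)))

end ContLemmas


section ConfigLemmas

lemma mono_chain {N : ℕ} {w : ℕ → ℝ} (h : ∀ i, i < N → w i < w (i+1)) :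
    ∀ i j, i < j → j ≤ N → w i < w j := by
  intro i j hij hjN
  induction j with
  | zero => omega
  | succ j ih =>
    rcases Nat.lt_or_ge i j with h1 | h1
    · exact lt_trans (ih h1 (by omega)) (h j (by omega))
    · have hij' : i = j := by omega
      subst hij'; exact h i (by omega)

lemma const_chain {iL iR : ℕ} (q : ℕ → ℝ)
    (hΔ : ∀ m, iL < m → m < iR → q m = q (m-1)) :
    ∀ k, iL ≤ k → k < iR → q k = q iL := by
  intro k hk1 hk2
  induction k with
  | zero =>
    have h0 : iL = 0 := by omega
    rw [h0]
  | succ k ih =>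
    rcases Nat.eq_or_lt_of_le hk1 with h1 | h1
    · rw [← h1]
    · have h2 := hΔ (k+1) h1 hk2
      rw [show k+1-1 = k from rfl] at h2
      rw [h2]
      exact ih (by omega) (by omega)

lemma calE_entry_nonneg (s : ℝ) {N : ℕ} {w : ℕ → ℝ}
    (hmono : ∀ i j, i < j → j ≤ N → w i < w j) (i : ℕ) :
    0 ≤ ∑ j ∈ Finset.Icc (i+1) N, (w j - w i) ^ (-s) := by
  apply Finset.sum_nonneg
  intro j hj
  rw [Finset.mem_Icc] at hj
  exact (Real.rpow_pos_of_pos (sub_pos.mpr (hmono i j (by omega) hj.2)) _).le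

lemma calE_nonneg (s : ℝ) {N : ℕ} {w : ℕ → ℝ}
    (hmono : ∀ i j, i < j → j ≤ N → w i < w j) : 0 ≤ calE s N w := by
  simp only [calE]
  exact Finset.sum_nonneg (fun i _ => calE_entry_nonneg s hmono i)

lemma calE_ge_term (s : ℝ) {N : ℕ} {w : ℕ → ℝ}
    (hmono : ∀ i j, i < j → j ≤ N → w i < w j) (m : ℕ) (hm : m < N) :
    (w (m+1) - w m) ^ (-s) ≤ calE s N w := by
  have h1 : ∑ j ∈ Finset.Icc (m+1) N, (w j - w m) ^ (-s) ≤ calE s N w := by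
    simp only [calE]
    exact Finset.single_le_sum (fun i _ => calE_entry_nonneg s hmono i)
      (Finset.mem_range.mpr (by omega))
  refine le_trans ?_ h1
  apply Finset.single_le_sum (f := fun j => (w j - w m) ^ (-s))
    ?_ (Finset.mem_Icc.mpr ⟨le_rfl, by omega⟩)
  intro j hj
  rw [Finset.mem_Icc] at hj
  exact (Real.rpow_pos_of_pos (sub_pos.mpr (hmono m j (by omega) hj.2)) _).le

end ConfigLemmas

section FminLemmas

lemma Fmin_bddBelow (s : ℝ) (N iL iR : ℕ) (y : ℕ → ℝ) :
    BddBelow {r : ℝ | ∃ k, iL ≤ k ∧ k < iR ∧ r = repP s N y k} := by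
  have he : {r : ℝ | ∃ k, iL ≤ k ∧ k < iR ∧ r = repP s N y k}
      = ↑((Finset.Ico iL iR).image (fun k => repP s N y k)) := by
    ext r
    simp only [Set.mem_setOf_eq, Finset.coe_image, Set.mem_image, Finset.mem_coe,
      Finset.mem_Ico]
    constructor
    · rintro ⟨k, h1, h2, rfl⟩; exact ⟨k, ⟨h1, h2⟩, rfl⟩
    · rintro ⟨k, ⟨h1, h2⟩, rfl⟩; exact ⟨k, h1, h2, rfl⟩
  rw [he]
  exact (Finset.finite_toSet _).bddBelow

lemma Fmin_le_repP (s : ℝ) (N iL iR : ℕ) (y : ℕ → ℝ) (k : ℕ) (h1 : iL ≤ k) (h2 : k < iR) :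
    Fmin s N iL iR y ≤ repP s N y k := by
  simp only [Fmin]
  exact csInf_le (Fmin_bddBelow s N iL iR y) ⟨k, h1, h2, rfl⟩

lemma le_Fmin (s : ℝ) (N iL iR : ℕ) (y : ℕ → ℝ) (hLR : iL < iR) (c : ℝ)
    (h : ∀ k, iL ≤ k → k < iR → c ≤ repP s N y k) : c ≤ Fmin s N iL iR y := by
  simp only [Fmin]
  refine le_csInf ⟨repP s N y iL, ⟨iL, le_rfl, hLR, rfl⟩⟩ ?_
  rintro r ⟨k, h1, h2, rfl⟩
  exact h k h1 h2

end FminLemmas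

section Endgame

lemma calE_ge_of_flat (s : ℝ) (hs0 : 0 < s) {N iL iR : ℕ} (hRN : iR ≤ N)
    (w z : ℕ → ℝ)
    (hwm : ∀ i j, i < j → j ≤ N → w i < w j)
    (hzm : ∀ i j, i < j → j ≤ N → z i < z j)
    (hsupp : ∀ m, z m - w m ≠ 0 → m ∈ Finset.Ioo iL iR)
    (hflat : ∀ m, iL < m → m < iR →
      (∑ j ∈ Finset.Icc (m+1) N, (w j - w m) ^ (-s-1))
        = ∑ i ∈ Finset.range m, (w m - w i) ^ (-s-1)) :
    calE s N w ≤ calE s N z := by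
  have reg := regroup_tri (iL := iL) (iR := iR)
    (fun i j => (-s) * (w j - w i) ^ (-s-1)) (fun m => z m - w m) hRN hsupp
  have h2 : ∑ m ∈ Finset.Ioo iL iR, (z m - w m) *
      ((∑ i ∈ Finset.range m, (-s) * (w m - w i) ^ (-s-1))
        - ∑ j ∈ Finset.Icc (m+1) N, (-s) * (w j - w m) ^ (-s-1)) = 0 := by
    apply Finset.sum_eq_zero
    intro m hm
    rw [Finset.mem_Ioo] at hm
    rw [← Finset.mul_sum, ← Finset.mul_sum, hflat m hm.1 hm.2]
    ring
  rw [h2] at reg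
  have h1 : calE s N w + ∑ i ∈ Finset.range (N+1), ∑ j ∈ Finset.Icc (i+1) N,
      (-s) * (w j - w i) ^ (-s-1) * (z j - w j - (z i - w i)) ≤ calE s N z := by
    simp only [calE]
    rw [← Finset.sum_add_distrib]
    apply Finset.sum_le_sum
    intro i _
    rw [← Finset.sum_add_distrib]
    apply Finset.sum_le_sum
    intro j hj
    rw [Finset.mem_Icc] at hj
    have ha : 0 < w j - w i := sub_pos.mpr (hwm i j (by omega) hj.2)
    have hb : 0 < z j - z i := sub_pos.mpr (hzm i j (by omega) hj.2)
    have ht := tangent_rpow_le (p := -s) (by linarith) ha hb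
    calc (w j - w i) ^ (-s) + (-s) * (w j - w i) ^ (-s-1) * (z j - w j - (z i - w i))
        = (w j - w i) ^ (-s) + (-s) * (w j - w i) ^ (-s - 1) * ((z j - z i) - (w j - w i)) := by
          ring
      _ ≤ (z j - z i) ^ (-s) := ht
  rw [reg] at h1
  linarith

lemma calE_mid_lt (s : ℝ) (hs0 : 0 < s) {N : ℕ}
    (w z : ℕ → ℝ)
    (hwm : ∀ i j, i < j → j ≤ N → w i < w j)
    (hzm : ∀ i j, i < j → j ≤ N → z i < z j)
    (h0 : w 0 = z 0)
    (m₀ : ℕ) (hm₀pos : 0 < m₀) (hm₀N : m₀ ≤ N) (hne : w m₀ ≠ z m₀) :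
    calE s N (fun i => (w i + z i) / 2) < (calE s N w + calE s N z) / 2 := by
  simp only [calE]
  have hre : (∑ i ∈ Finset.range (N+1), ∑ j ∈ Finset.Icc (i+1) N, (w j - w i) ^ (-s)
        + ∑ i ∈ Finset.range (N+1), ∑ j ∈ Finset.Icc (i+1) N, (z j - z i) ^ (-s)) / 2
      = ∑ i ∈ Finset.range (N+1), ∑ j ∈ Finset.Icc (i+1) N,
          (((w j - w i) ^ (-s)) + ((z j - z i) ^ (-s))) / 2 := by
    rw [← Finset.sum_add_distrib, Finset.sum_div]
    apply Finset.sum_congr rfl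
    intro i _
    rw [← Finset.sum_add_distrib, Finset.sum_div]
  rw [hre]
  apply Finset.sum_lt_sum
  · intro i _
    apply Finset.sum_le_sum
    intro j hj
    rw [Finset.mem_Icc] at hj
    have ha : 0 < w j - w i := sub_pos.mpr (hwm i j (by omega) hj.2)
    have hb : 0 < z j - z i := sub_pos.mpr (hzm i j (by omega) hj.2)
    have heq : (w j + z j) / 2 - (w i + z i) / 2 = ((w j - w i) + (z j - z i)) / 2 := by ring
    rw [heq]
    exact midpoint_rpow_le (by linarith) ha hb
  · refine ⟨0, Finset.mem_range.mpr (by omega), ?_⟩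
    apply Finset.sum_lt_sum
    · intro j hj
      rw [Finset.mem_Icc] at hj
      have ha : 0 < w j - w 0 := sub_pos.mpr (hwm 0 j (by omega) hj.2)
      have hb : 0 < z j - z 0 := sub_pos.mpr (hzm 0 j (by omega) hj.2)
      have heq : (w j + z j) / 2 - (w 0 + z 0) / 2 = ((w j - w 0) + (z j - z 0)) / 2 := by ring
      rw [heq]
      exact midpoint_rpow_le (by linarith) ha hb
    · refine ⟨m₀, Finset.mem_Icc.mpr ⟨by omega, hm₀N⟩, ?_⟩
      have ha : 0 < w m₀ - w 0 := sub_pos.mpr (hwm 0 m₀ (by omega) hm₀N)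
      have hb : 0 < z m₀ - z 0 := sub_pos.mpr (hzm 0 m₀ (by omega) hm₀N)
      have heq : (w m₀ + z m₀) / 2 - (w 0 + z 0) / 2
          = ((w m₀ - w 0) + (z m₀ - z 0)) / 2 := by ring
      rw [heq]
      apply midpoint_rpow_lt (by linarith) ha hb
      intro hc
      apply hne
      have : w 0 = z 0 := h0
      linarith
end Endgame

section KeyMove

lemma key_move (s : ℝ) (hs : 1 < s) (N iL iR : ℕ)
    (hLR : iL < iR) (hLR2 : iL + 1 < iR) (hRN : iR ≤ N)
    (w : ℕ → ℝ) (hwm : ∀ i j, i < j → j ≤ N → w i < w j)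
    (F : ℝ)
    (hq : ∀ k, iL ≤ k → k < iR → F ≤ repP s N w k)
    (hnc : ∃ k, iL ≤ k ∧ k < iR ∧ repP s N w k ≠ repP s N w iL) :
    ∃ v : ℕ → ℝ, (∀ m, v m ≠ 0 → m ∈ Finset.Ioo iL iR) ∧
      (∀ᶠ t in nhdsWithin 0 (Set.Ioi 0), calE s N (fun i => w i + t * v i) < calE s N w) ∧
      (∀ k, iL ≤ k → k < iR → ∀ᶠ t in nhdsWithin 0 (Set.Ioi 0),
        F ≤ repP s N (fun i => w i + t * v i) k) := by
  classical
  set V : ℕ → ℝ :=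
    fun m => if iL < m ∧ m < iR then -(repP s N w m - repP s N w (m-1)) else 0 with hV
  have hsupp : ∀ m, V m ≠ 0 → m ∈ Finset.Ioo iL iR := by
    intro m hm
    rw [Finset.mem_Ioo]
    by_contra hc
    apply hm
    simp only [hV, if_neg hc]
  have hVm : ∀ m, iL < m → m < iR → V m = -(repP s N w m - repP s N w (m-1)) := by
    intro m h1 h2
    simp only [hV, if_pos (And.intro h1 h2)]
  -- the Δ formula
  have hdelta : ∀ m, iL < m → m < iR →
      repP s N w m - repP s N w (m-1)
        = ∑ j ∈ Finset.Icc (m+1) N, (w j - w m) ^ (-s-1)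
          - ∑ i ∈ Finset.range m, (w m - w i) ^ (-s-1) := by
    intro m h1 h2
    cases m with
    | zero => omega
    | succ k =>
      have := repP_succ_sub s N w k (by omega)
      simpa using this
  -- nonconstancy of consecutive cut values
  have hΔne : ∃ m, iL < m ∧ m < iR ∧ repP s N w m ≠ repP s N w (m-1) := by
    by_contra hcon
    push_neg at hcon
    obtain ⟨k', h1, h2, hne⟩ := hnc
    exact hne (const_chain (fun k => repP s N w k) hcon k' h1 h2)
  refine ⟨V, hsupp, ?_, ?_⟩
  · -- energy decreases
    have hder := hasDerivAt_calE s N w V hwm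
    have heq1 : ∑ i ∈ Finset.range (N+1), ∑ j ∈ Finset.Icc (i+1) N,
        ((V j - V i) * (-s) * (w j - w i) ^ (-s-1))
        = ∑ i ∈ Finset.range (N+1), ∑ j ∈ Finset.Icc (i+1) N,
          ((-s) * (w j - w i) ^ (-s-1)) * (V j - V i) := by
      apply Finset.sum_congr rfl; intro i _
      apply Finset.sum_congr rfl; intro j _
      ring
    have hreg := regroup_tri (iL := iL) (iR := iR)
      (fun i j => (-s) * (w j - w i) ^ (-s-1)) V hRN hsupp
    rw [heq1, hreg] at hder
    have hterm : ∀ m, iL < m → m < iR →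
        V m * ((∑ i ∈ Finset.range m, (-s) * (w m - w i) ^ (-s-1))
          - ∑ j ∈ Finset.Icc (m+1) N, (-s) * (w j - w m) ^ (-s-1))
        = -s * (repP s N w m - repP s N w (m-1))^2 := by
      intro m h1 h2
      rw [hVm m h1 h2, ← Finset.mul_sum, ← Finset.mul_sum]
      rw [hdelta m h1 h2]
      ring
    have hDneg : ∑ m ∈ Finset.Ioo iL iR, V m *
        ((∑ i ∈ Finset.range m, (-s) * (w m - w i) ^ (-s-1))
          - ∑ j ∈ Finset.Icc (m+1) N, (-s) * (w j - w m) ^ (-s-1)) < 0 := by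
      have hzero : (0:ℝ) = ∑ m ∈ Finset.Ioo iL iR, (0:ℝ) := by simp
      rw [hzero]
      apply Finset.sum_lt_sum
      · intro m hm
        rw [Finset.mem_Ioo] at hm
        rw [hterm m hm.1 hm.2]
        nlinarith [sq_nonneg (repP s N w m - repP s N w (m-1))]
      · obtain ⟨m, h1, h2, hne⟩ := hΔne
        refine ⟨m, Finset.mem_Ioo.mpr ⟨h1, h2⟩, ?_⟩
        rw [hterm m h1 h2]
        have h' : repP s N w m - repP s N w (m-1) ≠ 0 := sub_ne_zero.mpr hne
        have h2' : 0 < (repP s N w m - repP s N w (m-1))^2 :=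
          lt_of_le_of_ne (sq_nonneg _) (Ne.symm (pow_ne_zero 2 h'))
        nlinarith
    have hev := eventually_lt_of_hasDerivAt_neg hder hDneg
    refine hev.mono ?_
    intro t ht
    have h0 : calE s N (fun i => w i + 0 * V i) = calE s N w := by
      congr 1; funext i; ring
    exact lt_of_lt_of_eq ht h0
  · -- cut constraints survive
    intro k hk1 hk2
    rcases eq_or_lt_of_le (hq k hk1 hk2) with hFq | hFq
    · -- active constraint: use the Abel estimates
      have hqk : repP s N w k = F := hFq.symm
      -- the witness of a strictly larger cut value
      have hW : ∃ m'', iL ≤ m'' ∧ m'' < iR ∧ F < repP s N w m'' := by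
        obtain ⟨k', h1, h2, hne⟩ := hnc
        rcases eq_or_lt_of_le (hq iL le_rfl hLR) with hL | hL
        · refine ⟨k', h1, h2, ?_⟩
          rcases eq_or_lt_of_le (hq k' h1 h2) with h3 | h3
          · exact absurd (by rw [← h3, ← hL]) hne
          · exact h3
        · exact ⟨iL, le_rfl, hLR, hL⟩
      have hderk := hasDerivAt_repP s N w V k (by omega) hwm
      have heq1 : ∑ i ∈ Finset.range (k+1), ∑ j ∈ Finset.Icc (k+1) N,
          ((V j - V i) * (-s-1) * (w j - w i) ^ (-s-2))
          = ∑ i ∈ Finset.range (k+1), ∑ j ∈ Finset.Icc (k+1) N,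
            ((-s-1) * (w j - w i) ^ (-s-2)) * (V j - V i) := by
        apply Finset.sum_congr rfl; intro i _
        apply Finset.sum_congr rfl; intro j _
        ring
      have hreg := regroup_rect (iL := iL) (iR := iR)
        (fun i j => (-s-1) * (w j - w i) ^ (-s-2)) V k hk2 hRN hsupp
      rw [heq1, hreg] at hderk
      -- split the sum in two parts
      set a : ℕ → ℝ := fun m => ∑ j ∈ Finset.Icc (k+1) N, (w j - w m) ^ (-s-2) with ha
      set b : ℕ → ℝ := fun m => ∑ i ∈ Finset.range (k+1), (w m - w i) ^ (-s-2) with hb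
      set q : ℕ → ℝ := fun m => repP s N w m with hqd
      have hIoo : Finset.Ioo iL iR = Finset.Ico (iL+1) iR := by
        ext a; simp only [Finset.mem_Ioo, Finset.mem_Ico]; omega
      have hsplit : ∑ m ∈ Finset.Ioo iL iR, V m *
            ((if k < m then ∑ i ∈ Finset.range (k+1), (-s-1) * (w m - w i) ^ (-s-2) else 0)
              - (if m ≤ k then ∑ j ∈ Finset.Icc (k+1) N, (-s-1) * (w j - w m) ^ (-s-2) else 0))
          = (s+1) * (- (∑ m ∈ Finset.Icc (iL+1) k, a m * (q m - q (m-1)))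
              + ∑ m ∈ Finset.Icc (k+1) (iR-1), b m * (q m - q (m-1))) := by
        rw [hIoo, ← Finset.sum_Ico_consecutive _ (by omega : iL+1 ≤ k+1) (by omega : k+1 ≤ iR)]
        rw [Finset.Ico_add_one_right_eq_Icc]
        have hIco2 : Finset.Ico (k+1) iR = Finset.Icc (k+1) (iR-1) := by
          ext a; simp only [Finset.mem_Ico, Finset.mem_Icc]; omega
        rw [hIco2]
        have hpart1 : ∀ m ∈ Finset.Icc (iL+1) k, V m *
            ((if k < m then ∑ i ∈ Finset.range (k+1), (-s-1) * (w m - w i) ^ (-s-2) else 0)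
              - (if m ≤ k then ∑ j ∈ Finset.Icc (k+1) N, (-s-1) * (w j - w m) ^ (-s-2) else 0))
            = (s+1) * -(a m * (q m - q (m-1))) := by
          intro m hm
          rw [Finset.mem_Icc] at hm
          rw [if_neg (by omega), if_pos (by omega : m ≤ k)]
          rw [hVm m (by omega) (by omega), ← Finset.mul_sum]
          simp only [ha, hqd]
          ring
        have hpart2 : ∀ m ∈ Finset.Icc (k+1) (iR-1), V m *
            ((if k < m then ∑ i ∈ Finset.range (k+1), (-s-1) * (w m - w i) ^ (-s-2) else 0)
              - (if m ≤ k then ∑ j ∈ Finset.Icc (k+1) N, (-s-1) * (w j - w m) ^ (-s-2) else 0))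
            = (s+1) * (b m * (q m - q (m-1))) := by
          intro m hm
          rw [Finset.mem_Icc] at hm
          rw [if_pos (by omega : k < m), if_neg (by omega)]
          rw [hVm m (by omega) (by omega), ← Finset.mul_sum]
          simp only [hb, hqd]
          ring
        rw [Finset.sum_congr rfl hpart1, Finset.sum_congr rfl hpart2]
        rw [← Finset.mul_sum, ← Finset.mul_sum, Finset.sum_neg_distrib]
        ring
      rw [hsplit] at hderk
      -- positivity of the derivative
      have hqF : ∀ m, iL ≤ m → m ≤ iR - 1 → F ≤ q m := by
        intro m h1 h2
        exact hq m h1 (by omega)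
      have hapos : ∀ m, m ≤ k → 0 < a m := by
        intro m hm
        apply Finset.sum_pos
        · intro j hj
          rw [Finset.mem_Icc] at hj
          exact Real.rpow_pos_of_pos (sub_pos.mpr (hwm m j (by omega) hj.2)) _
        · exact ⟨k+1, Finset.mem_Icc.mpr ⟨le_rfl, by omega⟩⟩
      have hamono : ∀ m, iL ≤ m → m < k → a m < a (m+1) := by
        intro m h1 h2
        apply Finset.sum_lt_sum_of_nonempty ⟨k+1, Finset.mem_Icc.mpr ⟨le_rfl, by omega⟩⟩
        intro j hj
        rw [Finset.mem_Icc] at hj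
        apply rpow_lt_rpow_of_base_lt (by linarith)
        · exact sub_pos.mpr (hwm (m+1) j (by omega) hj.2)
        · have := hwm m (m+1) (by omega) (by omega)
          linarith
      have hbtop : 0 < b (iR-1) := by
        apply Finset.sum_pos'
        · intro i hi
          rw [Finset.mem_range] at hi
          apply Real.rpow_nonneg
          rcases Nat.lt_or_ge i (iR-1) with h | h
          · exact (sub_pos.mpr (hwm i (iR-1) h (by omega))).le
          · have : i = iR - 1 := by omega
            rw [this]; simp
        · refine ⟨0, Finset.mem_range.mpr (by omega), ?_⟩
          exact Real.rpow_pos_of_pos (sub_pos.mpr (hwm 0 (iR-1) (by omega) (by omega))) _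
      have hbmono : ∀ m, k < m → m < iR - 1 → b (m+1) < b m := by
        intro m h1 h2
        apply Finset.sum_lt_sum_of_nonempty ⟨0, Finset.mem_range.mpr (by omega)⟩
        intro i hi
        rw [Finset.mem_range] at hi
        apply rpow_lt_rpow_of_base_lt (by linarith)
        · exact sub_pos.mpr (hwm i m (by omega) (by omega))
        · have := hwm m (m+1) (by omega) (by omega)
          linarith
      have hT1 : ∑ m ∈ Finset.Icc (iL+1) k, a m * (q m - q (m-1)) ≤ 0 :=
        abel_left_nonpos hk1 (fun m h1 h2 => hq m h1 (by omega)) hqk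
          (hapos iL hk1) (fun m h1 h2 => hamono m h1 h2)
      have hT2 : 0 ≤ ∑ m ∈ Finset.Icc (k+1) (iR-1), b m * (q m - q (m-1)) :=
        abel_right_nonneg (by omega) (fun m h1 h2 => hqF m (by omega) h2) hqk
          hbtop hbmono
      have hDpos : 0 < (s+1) * (- (∑ m ∈ Finset.Icc (iL+1) k, a m * (q m - q (m-1)))
          + ∑ m ∈ Finset.Icc (k+1) (iR-1), b m * (q m - q (m-1))) := by
        obtain ⟨m'', hm1, hm2, hm3⟩ := hW
        rcases Nat.lt_or_ge m'' k with hc | hc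
        · have hT1' : ∑ m ∈ Finset.Icc (iL+1) k, a m * (q m - q (m-1)) < 0 :=
            abel_left_neg hk1 (fun m h1 h2 => hq m h1 (by omega)) hqk
              (fun m h1 h2 => hapos m h2) (fun m h1 h2 => hamono m h1 h2)
              ⟨m'', hm1, hc, hm3⟩
          nlinarith
        · have hm''k : k < m'' := by
            rcases Nat.eq_or_lt_of_le hc with h | h
            · exfalso
              rw [← h] at hm3
              rw [hqk] at hm3
              exact lt_irrefl F hm3
            · exact h
          have hT2' : 0 < ∑ m ∈ Finset.Icc (k+1) (iR-1), b m * (q m - q (m-1)) :=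
            abel_right_pos (by omega) (fun m h1 h2 => hqF m (by omega) h2) hqk
              hbtop hbmono ⟨m'', hm''k, by omega, hm3⟩
          nlinarith
      have hev := eventually_gt_of_hasDerivAt_pos hderk hDpos
      refine hev.mono ?_
      intro t ht
      have h0 : repP s N (fun i => w i + 0 * V i) k = repP s N w k := by
        congr 1; funext i; ring
      rw [h0, hqk] at ht
      exact ht.le
    · -- inactive constraint: continuity
      have hderk := hasDerivAt_repP s N w V k (by omega) hwm
      have hcont := hderk.continuousAt
      have h0 : repP s N (fun i => w i + 0 * V i) k = repP s N w k := by
        congr 1; funext i; ring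
      have hlt : F < repP s N (fun i => w i + 0 * V i) k := by rw [h0]; exact hFq
      have hev := hcont.eventually (eventually_gt_nhds hlt)
      exact (hev.filter_mono nhdsWithin_le_nhds).mono (fun t ht => ht.le)

end KeyMove

section MainProof

/-- The `ε`-separated admissible configurations. -/
def Aset (N iL iR : ℕ) (x : ℕ → ℝ) (ε : ℝ) : Set (ℕ → ℝ) :=
  {v | (∀ i, i ≤ iL → v i = x i) ∧ (∀ i, iR ≤ i → v i = x i) ∧
    ∀ m, iL ≤ m → m < iR → ε ≤ v (m+1) - v m}

lemma mem_Aset {N iL iR : ℕ} {x : ℕ → ℝ} {ε : ℝ} {v : ℕ → ℝ} :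
    v ∈ Aset N iL iR x ε ↔ ((∀ i, i ≤ iL → v i = x i) ∧ (∀ i, iR ≤ i → v i = x i) ∧
      ∀ m, iL ≤ m → m < iR → ε ≤ v (m+1) - v m) := Iff.rfl

/-- The constraint set for the auxiliary minimization. -/
def KSet (s : ℝ) (N iL iR : ℕ) (x : ℕ → ℝ) (ε F : ℝ) : Set (ℕ → ℝ) :=
  {v | v ∈ Aset N iL iR x ε ∧ ∀ k, iL ≤ k → k < iR → F ≤ repP s N v k}

lemma mem_KSet {s : ℝ} {N iL iR : ℕ} {x : ℕ → ℝ} {ε F : ℝ} {v : ℕ → ℝ} :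
    v ∈ KSet s N iL iR x ε F ↔ (v ∈ Aset N iL iR x ε ∧
      ∀ k, iL ≤ k → k < iR → F ≤ repP s N v k) := Iff.rfl

end MainProof

set_option maxHeartbeats 2000000 in
theorem stmt6 (s : ℝ) (hs : 1 < s) (N iL iR : ℕ) (hN : 1 ≤ N)
    (hLR : iL < iR) (hLR2 : iL + 1 < iR) (hRN : iR ≤ N)
    (x : ℕ → ℝ)
    (hxl : ∀ i, i < iL → x i < x (i + 1))
    (hxr : ∀ i, iR ≤ i → i < N → x i < x (i + 1))
    (hmid : x iL < x iR)
    (ystar : ℕ → ℝ) (hyS : admis N iL iR x ystar)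
    (hymin : ∀ y', admis N iL iR x y' → calE s N ystar ≤ calE s N y') :
    ∀ y, admis N iL iR x y → Fmin s N iL iR y ≤ Fmin s N iL iR ystar := by
  intro y hy
  obtain ⟨hyL, hyR, hyinc⟩ := hy
  obtain ⟨hsL, hsR, hsinc⟩ := hyS
  have hym : ∀ i j, i < j → j ≤ N → y i < y j := mono_chain hyinc
  have hysm : ∀ i j, i < j → j ≤ N → ystar i < ystar j := mono_chain hsinc
  have hs0 : (0:ℝ) < s := by linarith
  -- the choice of ε
  have hE0 : 0 ≤ calE s N y := calE_nonneg s hym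
  have hδpos : 0 < (calE s N y + 1) ^ (-(1/s)) := Real.rpow_pos_of_pos (by linarith) _
  have hδs : calE s N y < ((calE s N y + 1) ^ (-(1/s))) ^ (-s) := by
    rw [← Real.rpow_mul (by linarith)]
    rw [show (-(1/s)) * (-s) = 1 by field_simp]
    rw [Real.rpow_one]; linarith
  have hKne : (Finset.Ico iL iR).Nonempty := ⟨iL, Finset.mem_Ico.mpr ⟨le_rfl, hLR⟩⟩
  set ε : ℝ := min ((calE s N y + 1) ^ (-(1/s)))
    ((Finset.Ico iL iR).inf' hKne (fun m => y (m+1) - y m)) with hεdef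
  have hεpos : 0 < ε := by
    rw [hεdef, lt_min_iff]
    refine ⟨hδpos, ?_⟩
    rw [Finset.lt_inf'_iff]
    intro m hm
    rw [Finset.mem_Ico] at hm
    have := hyinc m (by omega)
    linarith
  have hεy : ∀ m, iL ≤ m → m < iR → ε ≤ y (m+1) - y m := by
    intro m h1 h2
    exact le_trans (min_le_right _ _) (Finset.inf'_le _ (Finset.mem_Ico.mpr ⟨h1, h2⟩))
  have hεs : calE s N y < ε ^ (-s) := by
    refine lt_of_lt_of_le hδs ?_
    exact rpow_le_rpow_of_base_le (by linarith) hεpos (min_le_left _ _)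
  -- the constraint sets
  have hAmono : ∀ v ∈ Aset N iL iR x ε, ∀ i j, i < j → j ≤ N → v i < v j := by
    intro v hv
    obtain ⟨h1, h2, h3⟩ := hv
    apply mono_chain
    intro i hiN
    rcases Nat.lt_or_ge i iL with hc | hc
    · rw [h1 i (by omega), h1 (i+1) (by omega)]
      exact hxl i hc
    · rcases Nat.lt_or_ge i iR with hc2 | hc2
      · have := h3 i hc hc2
        linarith
      · rw [h2 i hc2, h2 (i+1) (by omega)]
        exact hxr i hc2 hiN
  have hKSsubA : KSet s N iL iR x ε (Fmin s N iL iR y) ⊆ Aset N iL iR x ε :=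
    fun v hv => hv.1
  -- closedness
  have hAclosed : IsClosed (Aset N iL iR x ε) := by
    have e1 : Aset N iL iR x ε = {v : ℕ → ℝ | ∀ i, i ≤ iL → v i = x i}
        ∩ ({v : ℕ → ℝ | ∀ i, iR ≤ i → v i = x i}
          ∩ {v : ℕ → ℝ | ∀ m, iL ≤ m → m < iR → ε ≤ v (m+1) - v m}) := by
      ext v
      simp only [Aset, Set.mem_setOf_eq, Set.mem_inter_iff]
    rw [e1]
    refine IsClosed.inter ?_ (IsClosed.inter ?_ ?_)
    · have e2 : {v : ℕ → ℝ | ∀ i, i ≤ iL → v i = x i}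
          = ⋂ (i : ℕ), ⋂ (_ : i ≤ iL), {v : ℕ → ℝ | v i = x i} := by
        ext v; simp
      rw [e2]
      exact isClosed_iInter fun i => isClosed_iInter fun _ =>
        isClosed_eq (continuous_apply i) continuous_const
    · have e2 : {v : ℕ → ℝ | ∀ i, iR ≤ i → v i = x i}
          = ⋂ (i : ℕ), ⋂ (_ : iR ≤ i), {v : ℕ → ℝ | v i = x i} := by
        ext v; simp
      rw [e2]
      exact isClosed_iInter fun i => isClosed_iInter fun _ =>
        isClosed_eq (continuous_apply i) continuous_const
    · have e2 : {v : ℕ → ℝ | ∀ m, iL ≤ m → m < iR → ε ≤ v (m+1) - v m}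
          = ⋂ (m : ℕ), ⋂ (_ : iL ≤ m), ⋂ (_ : m < iR), {v : ℕ → ℝ | ε ≤ v (m+1) - v m} := by
        ext v; simp
      rw [e2]
      exact isClosed_iInter fun m => isClosed_iInter fun _ => isClosed_iInter fun _ =>
        isClosed_le continuous_const ((continuous_apply (m+1)).sub (continuous_apply m))
  have hKSclosed : IsClosed (KSet s N iL iR x ε (Fmin s N iL iR y)) := by
    have e1 : KSet s N iL iR x ε (Fmin s N iL iR y) = ⋂ (k : ℕ), ⋂ (_ : iL ≤ k), ⋂ (_ : k < iR),
        (Aset N iL iR x ε ∩ (fun v => repP s N v k) ⁻¹' Set.Ici (Fmin s N iL iR y)) := by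
      ext v
      simp only [KSet, Set.mem_setOf_eq, Set.mem_iInter, Set.mem_inter_iff,
        Set.mem_preimage, Set.mem_Ici]
      constructor
      · rintro ⟨hvA, hvP⟩ k h1 h2
        exact ⟨hvA, hvP k h1 h2⟩
      · intro h
        exact ⟨(h iL le_rfl hLR).1, fun k h1 h2 => (h k h1 h2).2⟩
    rw [e1]
    exact isClosed_iInter fun k => isClosed_iInter fun _ => isClosed_iInter fun _ =>
      (continuousOn_repP s N k _ hAmono).preimage_isClosed_of_isClosed hAclosed isClosed_Ici
  -- boundedness and compactness
  have hAsub : Aset N iL iR x ε ⊆ Set.Icc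
      (fun i => if iL < i ∧ i < iR then x iL else x i)
      (fun i => if iL < i ∧ i < iR then x iR else x i) := by
    intro v hv
    obtain ⟨h1, h2, h3⟩ := hv
    rw [Set.mem_Icc]
    constructor
    · intro i
      show (if iL < i ∧ i < iR then x iL else x i) ≤ v i
      by_cases hcond : iL < i ∧ i < iR
      · rw [if_pos hcond]
        have hvl : v iL = x iL := h1 iL le_rfl
        have := hAmono v ⟨h1, h2, h3⟩ iL i hcond.1 (by omega)
        linarith
      · rw [if_neg hcond]
        rcases Nat.lt_or_ge iL i with hc | hc
        · have hge : iR ≤ i := by omega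
          rw [h2 i hge]
        · rw [h1 i hc]
    · intro i
      show v i ≤ (if iL < i ∧ i < iR then x iR else x i)
      by_cases hcond : iL < i ∧ i < iR
      · rw [if_pos hcond]
        have hvr : v iR = x iR := h2 iR le_rfl
        have := hAmono v ⟨h1, h2, h3⟩ i iR hcond.2 hRN
        linarith
      · rw [if_neg hcond]
        rcases Nat.lt_or_ge iL i with hc | hc
        · have hge : iR ≤ i := by omega
          rw [h2 i hge]
        · rw [h1 i hc]
  have hKScpt : IsCompact (KSet s N iL iR x ε (Fmin s N iL iR y)) :=
    IsCompact.of_isClosed_subset isCompact_Icc hKSclosed (subset_trans hKSsubA hAsub)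
  have hyA : y ∈ Aset N iL iR x ε := ⟨hyL, hyR, hεy⟩
  have hyKS : y ∈ KSet s N iL iR x ε (Fmin s N iL iR y) :=
    ⟨hyA, fun k h1 h2 => Fmin_le_repP s N iL iR y k h1 h2⟩
  obtain ⟨W, hWKS, hWmin⟩ := hKScpt.exists_isMinOn ⟨y, hyKS⟩
    ((continuousOn_calE_s6 s N _ hAmono).mono hKSsubA)
  have hWA : W ∈ Aset N iL iR x ε := hWKS.1
  have hWq : ∀ k, iL ≤ k → k < iR → Fmin s N iL iR y ≤ repP s N W k := hWKS.2
  have hWmono : ∀ i j, i < j → j ≤ N → W i < W j := hAmono W hWA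
  have hWEy : calE s N W ≤ calE s N y := isMinOn_iff.mp hWmin y hyKS
  -- gaps are strictly above ε at the minimizer
  have hWgap : ∀ m, iL ≤ m → m < iR → ε < W (m+1) - W m := by
    intro m h1 h2
    have hg := hWA.2.2 m h1 h2
    rcases lt_or_eq_of_le hg with h | h
    · exact h
    · exfalso
      have hterm := calE_ge_term s hWmono m (by omega)
      rw [← h] at hterm
      linarith [hεs]
  by_cases hflat : ∀ k, iL ≤ k → k < iR → repP s N W k = repP s N W iL
  · -- all cuts are equal at W : endgame
    have hflat' : ∀ m, iL < m → m < iR →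
        (∑ j ∈ Finset.Icc (m+1) N, (W j - W m) ^ (-s-1))
          = ∑ i ∈ Finset.range m, (W m - W i) ^ (-s-1) := by
      intro m h1 h2
      cases m with
      | zero => omega
      | succ k =>
        have hd := repP_succ_sub s N W k (by omega)
        have h3 : repP s N W (k+1) = repP s N W iL := hflat (k+1) (by omega) h2
        have h4 : repP s N W k = repP s N W iL := hflat k (by omega) (by omega)
        rw [h3, h4, sub_self] at hd
        rw [show k+1+1 = k+2 by omega]
        linarith [hd]
    have hWadm : admis N iL iR x W :=
      ⟨hWA.1, hWA.2.1, fun i hiN => hWmono i (i+1) (by omega) (by omega)⟩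
    have hWE2 : calE s N ystar ≤ calE s N W := hymin W hWadm
    have hout : ∀ m, ¬(iL < m ∧ m < iR) → W m = ystar m := by
      intro m hc
      push_neg at hc
      rcases Nat.lt_or_ge iL m with h | h
      · have hge : iR ≤ m := hc h
        rw [hsR m hge, hWA.2.1 m hge]
      · rw [hsL m h, hWA.1 m h]
    have hsupp' : ∀ m, ystar m - W m ≠ 0 → m ∈ Finset.Ioo iL iR := by
      intro m hm
      rw [Finset.mem_Ioo]
      by_contra hc
      exact hm (by rw [hout m hc, sub_self])
    have hWEeq : calE s N W ≤ calE s N ystar :=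
      calE_ge_of_flat s hs0 hRN W ystar hWmono hysm hsupp' hflat'
    have hWeq : ∀ i, W i = ystar i := by
      intro i
      by_contra hne
      have hiIoo : iL < i ∧ i < iR := by
        by_contra hc
        exact hne (hout i hc)
      have h00 : W 0 = ystar 0 := hout 0 (by omega)
      have hmidlt : calE s N (fun j => (W j + ystar j)/2) < (calE s N W + calE s N ystar)/2 :=
        calE_mid_lt s hs0 W ystar hWmono hysm h00 i (by omega) (by omega) hne
      have hmidadm : admis N iL iR x (fun j => (W j + ystar j)/2) := by
        refine ⟨?_, ?_, ?_⟩
        · intro j hj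
          show (W j + ystar j)/2 = x j
          rw [hWA.1 j hj, hsL j hj]
          ring
        · intro j hj
          show (W j + ystar j)/2 = x j
          rw [hWA.2.1 j hj, hsR j hj]
          ring
        · intro j hj
          show (W j + ystar j)/2 < (W (j+1) + ystar (j+1))/2
          have h1 := hWmono j (j+1) (by omega) (by omega)
          have h2 := hysm j (j+1) (by omega) (by omega)
          linarith
      have := hymin _ hmidadm
      linarith
    have hfun : W = ystar := funext hWeq
    refine le_Fmin s N iL iR ystar hLR _ ?_
    intro k h1 h2
    rw [← hfun]
    exact hWq k h1 h2
  · -- some cut differs : move and contradict minimality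
    exfalso
    push_neg at hflat
    obtain ⟨k', hk1, hk2, hkne⟩ := hflat
    obtain ⟨v, hsupp, hcal, hcut⟩ := key_move s hs N iL iR hLR hLR2 hRN W hWmono
      (Fmin s N iL iR y) hWq ⟨k', hk1, hk2, hkne⟩
    have hv0 : ∀ m, m ≤ iL ∨ iR ≤ m → v m = 0 := by
      intro m hm
      by_contra hne
      have := hsupp m hne
      rw [Finset.mem_Ioo] at this
      omega
    have hgapev : ∀ᶠ t in nhdsWithin 0 (Set.Ioi (0:ℝ)),
        ∀ m ∈ Finset.Ico iL iR, ε ≤ (W (m+1) + t * v (m+1)) - (W m + t * v m) := by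
      rw [Finset.eventually_all]
      intro m hm
      rw [Finset.mem_Ico] at hm
      have hco : Continuous (fun t : ℝ => (W (m+1) + t * v (m+1)) - (W m + t * v m)) :=
        (continuous_const.add (continuous_id.mul continuous_const)).sub
          (continuous_const.add (continuous_id.mul continuous_const))
      have h0 : ε < (W (m+1) + 0 * v (m+1)) - (W m + 0 * v m) := by
        have := hWgap m hm.1 hm.2
        simpa using this
      have hev := hco.continuousAt.eventually (eventually_gt_nhds h0)
      exact (hev.filter_mono nhdsWithin_le_nhds).mono (fun t ht => ht.le)
    have hcutev : ∀ᶠ t in nhdsWithin 0 (Set.Ioi (0:ℝ)),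
        ∀ k ∈ Finset.Ico iL iR, Fmin s N iL iR y ≤ repP s N (fun i => W i + t * v i) k := by
      rw [Finset.eventually_all]
      intro k hk
      rw [Finset.mem_Ico] at hk
      exact hcut k hk.1 hk.2
    obtain ⟨t, htE, htgap, htcut⟩ := (hcal.and (hgapev.and hcutev)).exists
    have hzA : (fun i => W i + t * v i) ∈ Aset N iL iR x ε := by
      refine ⟨?_, ?_, ?_⟩
      · intro i hi
        simp only []
        rw [hv0 i (Or.inl hi), mul_zero, add_zero]
        exact hWA.1 i hi
      · intro i hi
        simp only []
        rw [hv0 i (Or.inr hi), mul_zero, add_zero]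
        exact hWA.2.1 i hi
      · intro m h1 h2
        exact htgap m (Finset.mem_Ico.mpr ⟨h1, h2⟩)
    have hzKS : (fun i => W i + t * v i) ∈ KSet s N iL iR x ε (Fmin s N iL iR y) :=
      ⟨hzA, fun k h1 h2 => htcut k (Finset.mem_Ico.mpr ⟨h1, h2⟩)⟩
    have hge := isMinOn_iff.mp hWmin _ hzKS
    exact absurd htE (not_lt.mpr hge)
end

section
/- Fix s > 1, an integer N ≥ 1, indices 0 ≤ i_L < i_R ≤ N with i_L + 1 < i_R, and fixed reals x_0 < x_1 < ⋯ < x_{i_L} and x_{i_R} < x_{i_R+1} < ⋯ < x_N with x_{i_L} < x_{i_R}. Let X* = (x*_{i_L+1},…,x*_{i_R−1}) be the unique global minimizer of ℰ(X) := Σ_{0 ≤ i < j ≤ N} (x_j − x_i)^{−s} on S := { X : x_{i_L} < x_{i_L+1} < ⋯ < x_{i_R−1} < x_{i_R} }, and set x*_i := x_i for 0 ≤ i ≤ i_L and i_R ≤ i ≤ N. Then F_m(X*) = (x_{i_R} − x_{i_L})^{−1} · Σ (x*_{min(j, i_R)} − x*_{max(i, i_L)}) (x*_j − x*_i)^{−s−1},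 the sum being over all pairs 0 ≤ i < j ≤ N with i < i_R and j > i_L, where F_m(X) := min_{i_L ≤ k ≤ i_R−1} P_k(X). -/
open scoped BigOperators

/-!
At the minimizer every free coordinate `x*_m` (`i_L < m < i_R`) is an interior critical point
of `ℰ`, and `∂ℰ/∂x_m = s (Σ_{j>m} (x_j - x_m)^{-s-1} - Σ_{i<m} (x_m - x_i)^{-s-1}) = s (P_m - P_{m-1})`.
Hence all cuts `P_k`, `i_L ≤ k < i_R`, carry the same repulsion `P`, which is `F_m(X*)`.
Weighting `P_k` by the gap `x*_{k+1} - x*_k` and summing over `k` telescopes to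
`(x_{i_R} - x_{i_L}) P`; exchanging the order of summation, the pair `(i, j)` collects the gaps
`max(i, i_L) ≤ k < min(j, i_R)`, which telescope to `x*_{min(j, i_R)} - x*_{max(i, i_L)}`.
-/

open Finset

def cutSum {M : Type*} [AddCommMonoid M] (N : ℕ) (w : ℕ → ℕ → M) (k : ℕ) : M :=
  ∑ i ∈ range (k + 1), ∑ j ∈ Icc (k + 1) N, w i j

lemma repP_eq_cutSum (s : ℝ) (N : ℕ) (y : ℕ → ℝ) (k : ℕ) :
    repP s N y k = cutSum N (fun i j => (y j - y i) ^ (-s - 1)) k := rfl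

lemma cutSum_succ_add {M : Type*} [AddCommMonoid M] (N : ℕ) (w : ℕ → ℕ → M) {k : ℕ}
    (hk : k < N) :
    cutSum N w (k + 1) + ∑ i ∈ range (k + 1), w i (k + 1)
      = cutSum N w k + ∑ j ∈ Icc (k + 2) N, w (k + 1) j := by
  have hIcc : Icc (k + 1) N = insert (k + 1) (Icc (k + 2) N) :=
    (insert_Icc_add_one_left_eq_Icc hk).symm
  simp only [cutSum, sum_range_succ _ (k + 1), hIcc, sum_insert (by simp : k + 1 ∉ Icc (k + 2) N),
    sum_add_distrib]
  abel

lemma sum_Ico_sub_mul_cutSum {R : Type*} [CommRing R] (N : ℕ) (w : ℕ → ℕ → R) (y : ℕ → R)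
    {iL iR : ℕ} (hLR : iL ≤ iR) :
    ∑ k ∈ Ico iL iR, (y (k + 1) - y k) * cutSum N w k
      = ∑ i ∈ range iR, ∑ j ∈ (Ioc i N).filter (fun j => iL < j),
          (y (min j iR) - y (max i iL)) * w i j := by
  calc ∑ k ∈ Ico iL iR, (y (k + 1) - y k) * cutSum N w k
      = ∑ k ∈ Ico iL iR, ∑ i ∈ range (k + 1), ∑ j ∈ Icc (k + 1) N,
          (y (k + 1) - y k) * w i j := by simp only [cutSum, mul_sum]
    _ = ∑ i ∈ range iR, ∑ k ∈ Ico (max i iL) iR, ∑ j ∈ Icc (k + 1) N,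
          (y (k + 1) - y k) * w i j :=
        sum_comm' fun k i => by simp only [mem_Ico, mem_range, max_le_iff]; omega
    _ = ∑ i ∈ range iR, ∑ j ∈ (Ioc i N).filter (fun j => iL < j),
          ∑ k ∈ Ico (max i iL) (min j iR), (y (k + 1) - y k) * w i j :=
        sum_congr rfl fun i _ => sum_comm' fun k j => by
          simp only [mem_Ico, mem_Icc, mem_filter, mem_Ioc, max_le_iff, lt_min_iff]; omega
    _ = _ := by
        refine sum_congr rfl fun i hi => sum_congr rfl fun j hj => ?_
        simp only [mem_range, mem_filter, mem_Ioc] at hi hj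
        rw [← sum_mul, sum_Ico_sub y (by omega)]

lemma admis.strictMonoOn {N iL iR : ℕ} {x y : ℕ → ℝ} (hy : admis N iL iR x y) :
    StrictMonoOn y (Set.Iic N) :=
  strictMonoOn_Iic_of_lt_succ fun i hi => by simpa using hy.2.2 i hi

lemma admis_update {N iL iR : ℕ} {x y : ℕ → ℝ} (hy : admis N iL iR x y) {m : ℕ}
    (hLm : iL < m) (hmR : m < iR) {t : ℝ} (ht : t ∈ Set.Ioo (y (m - 1)) (y (m + 1))) :
    admis N iL iR x (Function.update y m t) := by
  refine ⟨fun i hi => ?_, fun i hi => ?_, fun i hi => ?_⟩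
  · rw [Function.update_of_ne (by omega)]; exact hy.1 i hi
  · rw [Function.update_of_ne (by omega)]; exact hy.2.1 i hi
  · rcases eq_or_ne i m with rfl | him
    · simpa [Function.update_of_ne (by omega : i + 1 ≠ i)] using ht.2
    rcases eq_or_ne (i + 1) m with rfl | hi1m
    · simpa [Function.update_of_ne him] using ht.1
    · simpa [Function.update_of_ne him, Function.update_of_ne hi1m] using hy.2.2 i hi

lemma hasDerivAt_update_apply (y : ℕ → ℝ) (m k : ℕ) :
    HasDerivAt (fun t => Function.update y m t k) (if k = m then 1 else 0) (y m) := by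
  rcases eq_or_ne k m with rfl | hkm
  · simpa only [Function.update_self, if_true] using hasDerivAt_id' (y k)
  · simpa only [Function.update_of_ne hkm, if_neg hkm] using hasDerivAt_const (y m) (y k)

lemma hasDerivAt_calE_update (s : ℝ) {N : ℕ} {y : ℕ → ℝ} (hy : StrictMonoOn y (Set.Iic N))
    {m : ℕ} (hm : m ≤ N) :
    HasDerivAt (fun t => calE s N (Function.update y m t))
      (s * (∑ j ∈ Icc (m + 1) N, (y j - y m) ^ (-s - 1)
        - ∑ i ∈ range m, (y m - y i) ^ (-s - 1))) (y m) := by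
  have hpair : ∀ i ∈ range (N + 1), ∀ j ∈ Icc (i + 1) N,
      HasDerivAt (fun t => (Function.update y m t j - Function.update y m t i) ^ (-s))
        (((if j = m then 1 else 0) - (if i = m then 1 else 0)) * (-s) * (y j - y i) ^ (-s - 1))
        (y m) := by
    intro i hi j hj
    simp only [mem_range, mem_Icc] at hi hj
    have hij : y i < y j := hy (Set.mem_Iic.2 (by omega)) (Set.mem_Iic.2 hj.2) (by omega)
    have := ((hasDerivAt_update_apply y m j).fun_sub (hasDerivAt_update_apply y m i)).rpow_const
      (p := -s) (by rw [Function.update_eq_self]; exact Or.inl (sub_pos.2 hij).ne')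
    rwa [Function.update_eq_self] at this
  refine (HasDerivAt.fun_sum fun i hi => HasDerivAt.fun_sum (hpair i hi)).congr_deriv ?_
  have hfilter : (range (N + 1)).filter (fun i => m ∈ Icc (i + 1) N) = range m := by
    ext i; simp only [mem_filter, mem_range, mem_Icc]; omega
  simp only [sub_mul, ite_mul, one_mul, zero_mul, sum_sub_distrib, sum_ite_eq', sum_ite_irrel,
    sum_const_zero, ← sum_filter, hfilter, mem_range, Nat.lt_succ_iff.2 hm, if_true, ← mul_sum]
  ring

section Minimizer

variable {s : ℝ} {N iL iR : ℕ} {x y : ℕ → ℝ}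

lemma force_balance_of_minimizer (hs : s ≠ 0) (hRN : iR ≤ N) (hy : admis N iL iR x y)
    (hmin : ∀ y', admis N iL iR x y' → calE s N y ≤ calE s N y') {m : ℕ}
    (hLm : iL < m) (hmR : m < iR) :
    ∑ j ∈ Icc (m + 1) N, (y j - y m) ^ (-s - 1) = ∑ i ∈ range m, (y m - y i) ^ (-s - 1) := by
  have hmono := hy.strictMonoOn
  have hlocal : IsLocalMin (fun t => calE s N (Function.update y m t)) (y m) := by
    have hnhds : Set.Ioo (y (m - 1)) (y (m + 1)) ∈ nhds (y m) :=
      Ioo_mem_nhds (hmono (Set.mem_Iic.2 (by omega)) (Set.mem_Iic.2 (by omega)) (by omega))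
        (hmono (Set.mem_Iic.2 (by omega)) (Set.mem_Iic.2 (by omega)) (by omega))
    filter_upwards [hnhds] with t ht
    simpa only [Function.update_eq_self] using hmin _ (admis_update hy hLm hmR ht)
  have hzero := hlocal.hasDerivAt_eq_zero (hasDerivAt_calE_update s hmono (by omega))
  exact sub_eq_zero.1 ((mul_eq_zero.1 hzero).resolve_left hs)

lemma repP_eq_of_minimizer (hs : s ≠ 0) (hRN : iR ≤ N) (hy : admis N iL iR x y)
    (hmin : ∀ y', admis N iL iR x y' → calE s N y ≤ calE s N y') :
    ∀ k, iL ≤ k → k < iR → repP s N y k = repP s N y iL := by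
  intro k hLk
  induction k, hLk using Nat.le_induction with
  | base => exact fun _ => rfl
  | succ k hLk ih =>
    intro hkR
    have hbalance := force_balance_of_minimizer hs hRN hy hmin (m := k + 1) (by omega) hkR
    have hcut := cutSum_succ_add N (fun i j => (y j - y i) ^ (-s - 1)) (k := k) (by omega)
    rw [← repP_eq_cutSum, ← repP_eq_cutSum, hbalance] at hcut
    rw [← ih (by omega)]
    exact add_right_cancel hcut

end Minimizer

lemma Fmin_eq_of_forall_repP_eq {s : ℝ} {N iL iR : ℕ} {y : ℕ → ℝ} {c : ℝ} (hLR : iL < iR)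
    (h : ∀ k, iL ≤ k → k < iR → repP s N y k = c) : Fmin s N iL iR y = c := by
  have hset : {r : ℝ | ∃ k, iL ≤ k ∧ k < iR ∧ r = repP s N y k} = {c} := by
    ext r
    simp only [Set.mem_ofPred_eq, Set.mem_singleton_iff]
    constructor
    · rintro ⟨k, hLk, hkR, rfl⟩
      exact h k hLk hkR
    · rintro rfl
      exact ⟨iL, le_rfl, hLR, (h iL le_rfl hLR).symm⟩
  rw [Fmin, hset, csInf_singleton]

theorem stmt7_general (s : ℝ) (hs : 1 < s) (N iL iR : ℕ)
    (hLR : iL < iR) (hRN : iR ≤ N)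
    (x : ℕ → ℝ)
    (hmid : x iL < x iR)
    (ystar : ℕ → ℝ) (hyS : admis N iL iR x ystar)
    (hymin : ∀ y', admis N iL iR x y' → calE s N ystar ≤ calE s N y') :
    Fmin s N iL iR ystar = (x iR - x iL)⁻¹ *
      ∑ i ∈ Finset.range iR, ∑ j ∈ (Finset.Ioc i N).filter (fun j => iL < j),
        (ystar (min j iR) - ystar (max i iL)) * (ystar j - ystar i) ^ (-s - 1) := by
  have hconst := repP_eq_of_minimizer (zero_lt_one.trans hs).ne' hRN hyS hymin
  have hweighted : ∑ k ∈ Ico iL iR, (ystar (k + 1) - ystar k) * repP s N ystar k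
      = (x iR - x iL) * repP s N ystar iL := by
    rw [sum_congr rfl fun k hk => by rw [hconst k (mem_Ico.1 hk).1 (mem_Ico.1 hk).2],
      ← sum_mul, sum_Ico_sub ystar hLR.le, hyS.2.1 iR le_rfl, hyS.1 iL le_rfl]
  rw [Fmin_eq_of_forall_repP_eq hLR hconst, ← sum_Ico_sub_mul_cutSum N _ ystar hLR.le]
  simp only [← repP_eq_cutSum]
  rw [hweighted, inv_mul_cancel_left₀ (sub_pos.2 hmid).ne']

theorem stmt7 (s : ℝ) (hs : 1 < s) (N iL iR : ℕ) (hN : 1 ≤ N)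
    (hLR : iL < iR) (hLR2 : iL + 1 < iR) (hRN : iR ≤ N)
    (x : ℕ → ℝ)
    (hxl : ∀ i, i < iL → x i < x (i + 1))
    (hxr : ∀ i, iR ≤ i → i < N → x i < x (i + 1))
    (hmid : x iL < x iR)
    (ystar : ℕ → ℝ) (hyS : admis N iL iR x ystar)
    (hymin : ∀ y', admis N iL iR x y' → calE s N ystar ≤ calE s N y') :
    Fmin s N iL iR ystar = (x iR - x iL)⁻¹ *
      ∑ i ∈ Finset.range iR, ∑ j ∈ (Finset.Ioc i N).filter (fun j => iL < j),
        (ystar (min j iR) - ystar (max i iL)) * (ystar j - ystar i) ^ (-s - 1) :=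
  stmt7_general s hs N iL iR hLR hRN x hmid ystar hyS hymin
end

section
/- Let x : ℝ → ℝ^d be a C^4 map with x(z+1) = x(z) for all z, ‖x'(z)‖ = 1 for all z, and x injective on [0,1). Then there exists r_0 > 0 such that for all y, z ∈ ℝ, ‖x(y) − x(z)‖ ≥ min( d(y,z)/2 , r_0 ), where d(y,z) := min_{k ∈ ℤ} |y − z + k| is the distance on the circle ℝ/ℤ. -/
open scoped BigOperators

/-- The distance on the circle `ℝ/ℤ`: `d(y,z) = min_{k ∈ ℤ} |y - z + k|`. -/
noncomputable def torDist (y z : ℝ) : ℝ := ⨅ k : ℤ, |y - z + (k : ℝ)|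

/-!
Near the diagonal the unit tangent `x'` varies by less than `1/2` (it is continuous and periodic,
hence uniformly continuous), so `x y - x z` stays within `|y - z| / 2` of `(y - z) • x' z`, a
vector of length `|y - z|`. Away from the diagonal, `x` descends to a continuous injection of the
compact circle `ℝ/ℤ`, and such a map has chords bounded below on pairs at distance `≥ δ`.
-/

open Set Function

namespace Function.Periodic

variable {Y : Type*} {f : ℝ → Y} {c : ℝ}

theorem continuous_lift [TopologicalSpace Y] (hf : Periodic f c) (hc : Continuous f) :
    Continuous (hf.lift : AddCircle c → Y) :=
  continuous_quot_lift _ hc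

theorem lift_injective (hf : Periodic f c) (hc : 0 < c) (hinj : InjOn f (Ico 0 c)) :
    Injective (hf.lift : AddCircle c → Y) := by
  have := Fact.mk hc
  intro p q hpq
  have hrep (p : AddCircle c) : ∃ a ∈ Ico 0 c, (a : AddCircle c) = p := by
    simpa using (AddCircle.coe_image_Ico_eq c 0).ge (mem_univ p)
  obtain ⟨a, ha, rfl⟩ := hrep p
  obtain ⟨b, hb, rfl⟩ := hrep q
  exact congrArg _ (hinj ha hb hpq)

theorem uniformContinuous_of_continuous [UniformSpace Y] (hf : Periodic f c) (hc : 0 < c)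
    (hcont : Continuous f) : UniformContinuous f := by
  have := Fact.mk hc
  have hmk : UniformContinuous ((↑) : ℝ → AddCircle c) :=
    LipschitzWith.uniformContinuous (K := 1) (LipschitzWith.of_dist_le_mul fun a b => by
      rw [NNReal.coe_one, one_mul, dist_eq_norm, dist_eq_norm, ← AddCircle.coe_sub]
      exact QuotientAddGroup.norm_mk_le_norm)
  exact (CompactSpace.uniformContinuous_of_continuous (hf.continuous_lift hcont)).comp hmk

protected theorem deriv {E : Type*} [NormedAddCommGroup E] [NormedSpace ℝ E] {f : ℝ → E}
    (hf : Periodic f c) : Periodic (deriv f) c := fun t => by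
  rw [← deriv_comp_add_const, hf.funext]

end Function.Periodic

theorem Continuous.exists_pos_le_dist_of_injective {X Y : Type*} [PseudoMetricSpace X]
    [CompactSpace X] [MetricSpace Y] {f : X → Y} (hf : Continuous f) (hinj : Injective f)
    {δ : ℝ} (hδ : 0 < δ) : ∃ r > 0, ∀ p q, δ ≤ dist p q → r ≤ dist (f p) (f q) := by
  have hK : IsCompact {pq : X × X | δ ≤ dist pq.1 pq.2} :=
    (isClosed_le continuous_const continuous_dist).isCompact
  obtain ⟨r, hr, hbound⟩ := hK.exists_forall_le' (a := 0)
    ((hf.comp continuous_fst).dist (hf.comp continuous_snd)).continuousOn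
    fun pq hpq => dist_pos.mpr <| hinj.ne fun h => by
      have : δ ≤ 0 := by simpa [h] using hpq
      linarith
  exact ⟨r, hr, fun p q hpq => hbound (p, q) hpq⟩

theorem mul_abs_sub_le_norm_sub_of_norm_deriv_sub_le {E : Type*} [NormedAddCommGroup E]
    [NormedSpace ℝ E] {f : ℝ → E} (hf : Differentiable ℝ f) {a b ε : ℝ}
    (hε : ∀ t ∈ uIcc b a, ‖deriv f t - deriv f b‖ ≤ ε) :
    (‖deriv f b‖ - ε) * |a - b| ≤ ‖f a - f b‖ := by
  set g : ℝ → E := fun t => f t - t • deriv f b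
  have hg : ∀ t ∈ uIcc b a, HasDerivWithinAt g (deriv f t - deriv f b) (uIcc b a) t :=
    fun t _ => ((hf t).hasDerivAt.sub ((hasDerivAt_id' t).smul_const (deriv f b))).hasDerivWithinAt
      |>.congr_deriv (by rw [one_smul])
  have hlin : ‖g a - g b‖ ≤ ε * |a - b| := by
    simpa using (convex_uIcc b a).norm_image_sub_le_of_norm_hasDerivWithin_le hg hε
      left_mem_uIcc right_mem_uIcc
  have hgab : (a - b) • deriv f b - (f a - f b) = -(g a - g b) := by
    simp only [g, sub_smul]; abel
  calc (‖deriv f b‖ - ε) * |a - b| ≤ ‖(a - b) • deriv f b‖ - ‖g a - g b‖ := by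
        rw [norm_smul, Real.norm_eq_abs]; nlinarith [abs_nonneg (a - b)]
    _ ≤ ‖f a - f b‖ := by
        rw [← norm_neg (g a - g b), ← hgab]
        exact (norm_sub_norm_le _ _).trans_eq (by rw [sub_sub_cancel])

theorem torDist_eq_abs_sub_round (y z : ℝ) : torDist y z = |y - z - round (y - z)| := by
  unfold torDist
  refine le_antisymm ?_ (le_ciInf fun k => ?_)
  · refine (ciInf_le ⟨0, ?_⟩ (-round (y - z))).trans_eq ?_
    · rintro _ ⟨k, rfl⟩; positivity
    · rw [Int.cast_neg, ← sub_eq_add_neg]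
  · simpa using round_le (y - z) (-k)

theorem torDist_eq_dist_coe (y z : ℝ) : torDist y z = dist (y : UnitAddCircle) z := by
  rw [dist_eq_norm, ← AddCircle.coe_sub, UnitAddCircle.norm_eq, torDist_eq_abs_sub_round]

theorem stmt8 (d : ℕ) (x : ℝ → EuclideanSpace ℝ (Fin d))
    (hC4 : ContDiff ℝ 4 x)
    (hper : ∀ z : ℝ, x (z + 1) = x z)
    (hunit : ∀ z : ℝ, ‖deriv x z‖ = 1)
    (hinj : Set.InjOn x (Set.Ico (0 : ℝ) 1)) :
    ∃ r₀ : ℝ, 0 < r₀ ∧ ∀ y z : ℝ, ‖x y - x z‖ ≥ min (torDist y z / 2) r₀ := by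
  have hx : Periodic x 1 := hper
  obtain ⟨δ, hδ, hnear⟩ := Metric.uniformContinuous_iff.mp
    (hx.deriv.uniformContinuous_of_continuous one_pos (hC4.continuous_deriv (by norm_num)))
    (1 / 2) (by norm_num)
  obtain ⟨r, hr, hfar⟩ := (hx.continuous_lift hC4.continuous).exists_pos_le_dist_of_injective
    (hx.lift_injective one_pos hinj) hδ
  refine ⟨r, hr, fun y z => ?_⟩
  rcases lt_or_ge (torDist y z) δ with hyz | hyz
  · set y' := y - round (y - z) with hy'
    have hdist : |y' - z| = torDist y z := by rw [hy', torDist_eq_abs_sub_round]; congr 1; ring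
    have hxy' : x y' = x y := by simpa using hx.sub_int_mul_eq (round (y - z))
    have key := mul_abs_sub_le_norm_sub_of_norm_deriv_sub_le (hC4.differentiable (by norm_num))
      (a := y') (b := z) (ε := 1 / 2) fun t ht => by
        rw [← dist_eq_norm]
        exact (hnear ((abs_sub_left_of_mem_uIcc ht).trans_lt (hdist ▸ hyz))).le
    rw [hunit, hdist, hxy'] at key
    linarith [min_le_left (torDist y z / 2) r]
  · calc min (torDist y z / 2) r ≤ r := min_le_right _ _
      _ ≤ dist (hx.lift y) (hx.lift z) := hfar _ _ (torDist_eq_dist_coe y z ▸ hyz)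
      _ = ‖x y - x z‖ := by rw [hx.lift_coe, hx.lift_coe, dist_eq_norm]
end

section
/- Let x : ℝ → ℝ^d be a C^4 map with x(z+1) = x(z) for all z, ‖x'(z)‖ = 1 for all z, and x injective on [0,1), and let s > 1. Suppose z = (z_1,…,z_N) : [0,∞) → ℝ^N is differentiable, satisfies z_1(t) < ⋯ < z_N(t) < z_1(t) + 1 for all t ≥ 0, and solves ż_i(t) = V_i(z(t)) for all i and t. Then t ↦ E(z(t)) is differentiable and (d/dt) E(z(t)) = −(1/N) Σ_{i=1}^N |ż_i(t)|² for all t ≥ 0. -/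
open scoped BigOperators

/-- `E(Z) = N^{-s-1} Σ_{1 ≤ i < j ≤ N} ‖x(z_i) - x(z_j)‖^{-s} / s`. -/
noncomputable def energyE (d : ℕ) (s : ℝ) (N : ℕ) (x : ℝ → EuclideanSpace ℝ (Fin d))
    (z : ℤ → ℝ) : ℝ :=
  (N : ℝ) ^ (-s - 1) *
    ∑ i ∈ Finset.Icc (1 : ℤ) (N : ℤ), ∑ j ∈ Finset.Icc (i + 1) (N : ℤ),
      ‖x (z i) - x (z j)‖ ^ (-s) / s

/-- The gradient-flow vector field
`V_i(Z) = N^{-s} Σ_{j=i+1}^{i+N-1} ‖x(z_i) - x(z_j)‖^{-s-2} ⟨x(z_i) - x(z_j), x'(z_i)⟩`. -/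
noncomputable def forceV (d : ℕ) (s : ℝ) (N : ℕ) (x : ℝ → EuclideanSpace ℝ (Fin d))
    (z : ℤ → ℝ) (i : ℤ) : ℝ :=
  (N : ℝ) ^ (-s) *
    ∑ j ∈ Finset.Icc (i + 1) (i + (N : ℤ) - 1),
      ‖x (z i) - x (z j)‖ ^ (-s - 2) * (inner ℝ (x (z i) - x (z j)) (deriv x (z i)) : ℝ)

/-! Along the flow, the pair term `‖x(z_i) - x(z_j)‖^{-s}/s` of the energy has derivative
`-(ż_i F(z_i, z_j) + ż_j F(z_j, z_i))`, where `F` is the pair force of which `V_i` is the scaled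
sum. The points `x(z_i)`, `x(z_j)` stay distinct because `0 < z_j - z_i < 1` and `x` is injective
on a period. Since `F(z_i, z_{j+N}) = F(z_i, z_j)`, the sum over the pairs `1 ≤ i < j ≤ N` taken in
both orientations regroups into the cyclic sums `Σ_i ż_i Σ_{j=i+1}^{i+N-1} F(z_i, z_j)
= N^s Σ_i ż_i V_i = N^s Σ_i ż_i²`, and the prefactor `N^{-s-1}` leaves `-(1/N) Σ_i ż_i²`. -/

open Finset Function
open scoped InnerProductSpace

theorem HasDerivAt.norm_rpow_of_ne_zero {E : Type*} [NormedAddCommGroup E] [InnerProductSpace ℝ E]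
    {φ : ℝ → E} {φ' : E} {t : ℝ} (p : ℝ) (hφ : HasDerivAt φ φ' t) (h0 : φ t ≠ 0) :
    HasDerivAt (fun τ => ‖φ τ‖ ^ p) (p * ‖φ t‖ ^ (p - 2) * ⟪φ t, φ'⟫_ℝ) t := by
  have hpow : ∀ v : E, ∀ q : ℝ, (‖v‖ ^ 2) ^ (q / 2) = ‖v‖ ^ q := fun v q => by
    rw [← Real.rpow_natCast, ← Real.rpow_mul (norm_nonneg v)]; congr 1; push_cast; ring
  have hsq : ‖φ t‖ ^ 2 ≠ 0 := pow_ne_zero 2 (norm_ne_zero_iff.mpr h0)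
  convert hφ.norm_sq.rpow_const (p := p / 2) (Or.inl hsq) using 1
  · simp only [hpow]
  · rw [show p / 2 - 1 = (p - 2) / 2 by ring, hpow]
    ring

theorem Function.Periodic.apply_ne_of_lt_of_lt_add_one {α : Type*} {x : ℝ → α}
    (hper : Periodic x 1) (hinj : Set.InjOn x (Set.Ico 0 1)) {a b : ℝ} (hab : a < b)
    (hba : b < a + 1) : x a ≠ x b := by
  have hfract : ∀ u, x (Int.fract u) = x u := fun u => by
    simpa [Int.self_sub_floor] using hper.sub_int_mul_eq (n := ⌊u⌋) (x := u)
  have hmem : ∀ u : ℝ, Int.fract u ∈ Set.Ico (0 : ℝ) 1 :=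
    fun u => ⟨Int.fract_nonneg u, Int.fract_lt_one u⟩
  intro h
  obtain ⟨n, hn⟩ := Int.fract_eq_fract.mp
    (hinj (hmem a) (hmem b) (by rw [hfract, hfract, h]))
  have hlo : (-1 : ℝ) < n := by linarith
  have hhi : (n : ℝ) < 0 := by linarith
  norm_cast at hlo hhi
  omega

section CyclicSums

variable {M : Type*} [AddCommMonoid M]

theorem Finset.sum_Icc_add_one_add_sub_one_of_periodic {N : ℤ} {f : ℤ → M}
    (hf : Periodic f N) {i : ℤ} (hi : i ∈ Icc 1 N) :
    ∑ j ∈ Icc (i + 1) (i + N - 1), f j = ∑ j ∈ Icc (i + 1) N, f j + ∑ j ∈ Icc 1 (i - 1), f j := by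
  rw [mem_Icc] at hi
  have hsplit : Icc (i + 1) (i + N - 1) = Icc (i + 1) N ∪ Icc (N + 1) (i + N - 1) := by
    ext k; simp only [mem_Icc, mem_union]; omega
  have hdisj : Disjoint (Icc (i + 1) N) (Icc (N + 1) (i + N - 1)) := by
    rw [disjoint_left]; intro k hk hk'; rw [mem_Icc] at hk hk'; omega
  have hshift : Icc (N + 1) (i + N - 1) = (Icc 1 (i - 1)).map (addRightEmbedding N) := by
    rw [map_add_right_Icc]; congr 1 <;> ring
  rw [hsplit, sum_union hdisj, hshift, sum_map]
  exact congrArg _ (sum_congr rfl fun j _ => hf j)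

theorem Finset.sum_Icc_sum_Icc_add_one_comm (a b : ℤ) (F : ℤ → ℤ → M) :
    ∑ i ∈ Icc a b, ∑ j ∈ Icc (i + 1) b, F i j = ∑ j ∈ Icc a b, ∑ i ∈ Icc a (j - 1), F i j :=
  sum_comm' fun i j => by simp only [mem_Icc]; omega

end CyclicSums

theorem Finset.sum_pairs_eq_sum_mul_sum_cyclic {R : Type*} [CommSemiring R] (N : ℤ)
    (v : ℤ → R) (A : ℤ → ℤ → R) (hA : ∀ i, Periodic (A i) N) :
    ∑ i ∈ Icc 1 N, ∑ j ∈ Icc (i + 1) N, (v i * A i j + v j * A j i)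
      = ∑ i ∈ Icc 1 N, v i * ∑ j ∈ Icc (i + 1) (i + N - 1), A i j := by
  simp only [sum_add_distrib]
  rw [sum_Icc_sum_Icc_add_one_comm 1 N (fun i j => v j * A j i), ← sum_add_distrib]
  refine sum_congr rfl fun i hi => ?_
  rw [sum_Icc_add_one_add_sub_one_of_periodic (hA i) hi, mul_add, mul_sum, mul_sum]

section PairEnergy

variable {E : Type*} [NormedAddCommGroup E] [InnerProductSpace ℝ E]

noncomputable def pairForce (s : ℝ) (x : ℝ → E) (a b : ℝ) : ℝ :=
  ‖x a - x b‖ ^ (-s - 2) * ⟪x a - x b, deriv x a⟫_ℝ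

theorem hasDerivAt_norm_sub_rpow_neg_div {s : ℝ} (hs : s ≠ 0) {x : ℝ → E} {f g : ℝ → ℝ}
    {f' g' t : ℝ} (hf : HasDerivAt f f' t) (hg : HasDerivAt g g' t)
    (hxf : DifferentiableAt ℝ x (f t)) (hxg : DifferentiableAt ℝ x (g t))
    (hne : x (f t) ≠ x (g t)) :
    HasDerivAt (fun τ => ‖x (f τ) - x (g τ)‖ ^ (-s) / s)
      (-(f' * pairForce s x (f t) (g t) + g' * pairForce s x (g t) (f t))) t := by
  have hφ : HasDerivAt (fun τ => x (f τ) - x (g τ)) (f' • deriv x (f t) - g' • deriv x (g t)) t :=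
    (hxf.hasDerivAt.scomp t hf).sub (hxg.hasDerivAt.scomp t hg)
  refine ((hφ.norm_rpow_of_ne_zero (-s) (sub_ne_zero.mpr hne)).div_const s).congr_deriv ?_
  simp only [pairForce, inner_sub_right, real_inner_smul_right, ← neg_sub (x (f t)) (x (g t)),
    inner_neg_left, norm_neg]
  field_simp
  ring

end PairEnergy

theorem stmt14_general (d : ℕ) (s : ℝ) (hs : 1 < s)
    (x : ℝ → EuclideanSpace ℝ (Fin d))
    (hC4 : ContDiff ℝ 4 x)
    (hper : ∀ z : ℝ, x (z + 1) = x z)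
    (hinj : Set.InjOn x (Set.Ico (0 : ℝ) 1))
    (N : ℕ) (y : ℝ → ℤ → ℝ)
    (hyper : ∀ t : ℝ, 0 ≤ t → ∀ i : ℤ, y t (i + (N : ℤ)) = y t i + 1)
    (hysort : ∀ t : ℝ, 0 ≤ t → ∀ i : ℤ, y t i < y t (i + 1))
    (hflow : ∀ t : ℝ, 0 ≤ t → ∀ i : ℤ,
      HasDerivAt (fun τ => y τ i) (forceV d s N x (y t) i) t) :
    ∀ t : ℝ, 0 ≤ t →
      HasDerivAt (fun τ => energyE d s N x (y τ))
        (-(1 / (N : ℝ)) * ∑ i ∈ Finset.Icc (1 : ℤ) (N : ℤ), (forceV d s N x (y t) i) ^ 2)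
        t := by
  intro t ht
  set v : ℤ → ℝ := forceV d s N x (y t)
  set A : ℤ → ℤ → ℝ := fun i j => pairForce s x (y t i) (y t j)
  have hmono : StrictMono (y t) := strictMono_int_of_lt_succ (hysort t ht)
  have hderiv : HasDerivAt (fun τ => energyE d s N x (y τ))
      ((N : ℝ) ^ (-s - 1) * ∑ i ∈ Icc 1 (N : ℤ), ∑ j ∈ Icc (i + 1) (N : ℤ),
        -(v i * A i j + v j * A j i)) t := by
    refine .const_mul _ (.fun_sum fun i hi => .fun_sum fun j hj => ?_)
    rw [mem_Icc] at hi hj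
    refine hasDerivAt_norm_sub_rpow_neg_div (by positivity) (hflow t ht i) (hflow t ht j)
      (hC4.differentiable (by norm_num) _) (hC4.differentiable (by norm_num) _) ?_
    refine Periodic.apply_ne_of_lt_of_lt_add_one hper hinj (hmono (by omega)) ?_
    simpa [hyper t ht i] using hmono (show j < i + N by omega)
  have hA : ∀ i, Periodic (A i) (N : ℤ) := fun i j => by
    simp only [A, pairForce, hyper t ht j, hper]
  have hNs : (N : ℝ) ^ (-s - 1) = (N : ℝ) ^ (-1 : ℝ) * (N : ℝ) ^ (-s) := by
    rw [← Real.rpow_add' (Nat.cast_nonneg N) (by linarith)]; ring_nf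
  convert hderiv using 1
  simp only [sum_neg_distrib]
  rw [sum_pairs_eq_sum_mul_sum_cyclic _ v A hA, hNs, Real.rpow_neg_one, mul_neg, mul_sum,
    mul_sum, ← sum_neg_distrib]
  refine sum_congr rfl fun i _ => ?_
  simp only [v, A, forceV, pairForce]
  ring

theorem stmt14 (d : ℕ) (s : ℝ) (hs : 1 < s)
    (x : ℝ → EuclideanSpace ℝ (Fin d))
    (hC4 : ContDiff ℝ 4 x)
    (hper : ∀ z : ℝ, x (z + 1) = x z)
    (hunit : ∀ z : ℝ, ‖deriv x z‖ = 1)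
    (hinj : Set.InjOn x (Set.Ico (0 : ℝ) 1))
    (N : ℕ) (y : ℝ → ℤ → ℝ)
    (hyper : ∀ t : ℝ, 0 ≤ t → ∀ i : ℤ, y t (i + (N : ℤ)) = y t i + 1)
    (hysort : ∀ t : ℝ, 0 ≤ t → ∀ i : ℤ, y t i < y t (i + 1))
    (hflow : ∀ t : ℝ, 0 ≤ t → ∀ i : ℤ,
      HasDerivAt (fun τ => y τ i) (forceV d s N x (y t) i) t) :
    ∀ t : ℝ, 0 ≤ t →
      HasDerivAt (fun τ => energyE d s N x (y τ))
        (-(1 / (N : ℝ)) * ∑ i ∈ Finset.Icc (1 : ℤ) (N : ℤ), (forceV d s N x (y t) i) ^ 2)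
        t :=
  stmt14_general d s hs x hC4 hper hinj N y hyper hysort hflow
end

section
/- Let s > 0, let N ≥ 2 be an integer, and let Z = (z_1,…,z_N) ∈ ℝ^N satisfy z_1 < z_2 < ⋯ < z_N < z_1 + 1, extended by z_{i+N} = z_i + 1 for all i ∈ ℤ. Then for every integer k with 1 ≤ k ≤ N − 1: s^{−1} k^{−s} ≤ Ẽ^k(Z) ≤ k^{−s} Ẽ^1(Z), where Ẽ^k(Z) := (1/(s N^{s+1})) Σ_{i=1}^N (z_{i+k} − z_i)^{−s}. -/
/-!
Write `g_k(i) = z_{i+k} - z_i`. Both bounds are Jensen's inequality for the convex function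
`x ↦ x^(-s)`, in the form `n^(s+1) (∑ x)^(-s) ≤ ∑ x^(-s)`. Over a period the `N` gaps `g_k(i)`
sum to `k`, which gives `N^(s+1) k^(-s) ≤ ∑ g_k(i)^(-s)`, the lower bound. For the upper bound,
`g_k(i)` is the sum of the `k` consecutive gaps `g_1(i + j)`, `j < k`, so
`k^(s+1) g_k(i)^(-s) ≤ ∑_j g_1(i + j)^(-s)`; summed over a period, by periodicity of `g_1`
each `g_1(i)^(-s)` appears `k` times on the right.
-/

open scoped BigOperators

/-- `Ẽ^k(Z) = (1/(s N^{s+1})) Σ_{i=1}^N (z_{i+k} - z_i)^{-s}`. -/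
noncomputable def EtildeK (s : ℝ) (N : ℕ) (z : ℤ → ℝ) (k : ℕ) : ℝ :=
  (1 / (s * (N : ℝ) ^ (s + 1))) *
    ∑ i ∈ Finset.Icc (1 : ℤ) (N : ℤ), (z (i + (k : ℤ)) - z i) ^ (-s)

open Finset Function

section Periodic

variable {M : Type*}

theorem Finset.sum_Icc_one_eq_sum_range [AddCommMonoid M] (f : ℤ → M) (N : ℕ) :
    ∑ i ∈ Icc (1 : ℤ) N, f i = ∑ j ∈ range N, f (j + 1) := by
  induction N with
  | zero => simp
  | succ N ih =>
    rw [sum_range_succ, ← ih, Nat.cast_succ, ← insert_Icc_right_eq_Icc_add_one (by omega),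
      sum_insert (by simp), add_comm]

variable [AddCancelCommMonoid M] {f : ℤ → M} {N : ℕ}

theorem Function.Periodic.sum_Icc_one_comp_add (hf : Periodic f N) (c : ℕ) :
    ∑ i ∈ Icc (1 : ℤ) N, f (i + c) = ∑ i ∈ Icc (1 : ℤ) N, f i := by
  induction c with
  | zero => simp
  | succ c ih =>
    rw [← ih, sum_Icc_one_eq_sum_range, sum_Icc_one_eq_sum_range]
    refine add_right_cancel (b := f (1 + c)) ?_
    have h := sum_range_succ' (fun j : ℕ => f (j + 1 + c)) N
    rw [sum_range_succ, show ((N : ℤ) + 1 + c) = 1 + c + N by ring, hf] at h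
    simpa [add_assoc, add_comm, add_left_comm] using h.symm

theorem Function.Periodic.sum_Icc_one_sum_range_comp_add (hf : Periodic f N) (k : ℕ) :
    ∑ i ∈ Icc (1 : ℤ) N, ∑ j ∈ range k, f (i + j) = k • ∑ i ∈ Icc (1 : ℤ) N, f i := by
  rw [sum_comm, sum_congr rfl fun j _ => hf.sum_Icc_one_comp_add j, sum_const, card_range]

end Periodic

theorem Finset.card_rpow_mul_sum_rpow_neg_le {ι : Type*} (T : Finset ι) {s : ℝ} (hs : 0 < s)
    {x : ι → ℝ} (hx : ∀ i ∈ T, 0 < x i) :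
    (#T : ℝ) ^ (s + 1) * (∑ i ∈ T, x i) ^ (-s) ≤ ∑ i ∈ T, x i ^ (-s) := by
  rcases T.eq_empty_or_nonempty with rfl | hT
  · simp [Real.zero_rpow (by linarith : s + 1 ≠ 0)]
  have hpq : Real.HolderConjugate ((s + 1) / s) (s + 1) := by
    constructor <;> [field_simp; positivity; positivity]
  have holder := Real.inner_le_Lp_mul_Lq_of_nonneg T hpq
    (f := fun i => x i ^ (s / (s + 1))) (g := fun i => x i ^ (-(s / (s + 1))))
    (fun i hi => (Real.rpow_pos_of_pos (hx i hi) _).le)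
    (fun i hi => (Real.rpow_pos_of_pos (hx i hi) _).le)
  have h1 : ∀ i ∈ T, x i ^ (s / (s + 1)) * x i ^ (-(s / (s + 1))) = 1 := fun i hi => by
    rw [← Real.rpow_add (hx i hi), add_neg_cancel, Real.rpow_zero]
  have h2 : ∀ i ∈ T, (x i ^ (s / (s + 1))) ^ ((s + 1) / s) = x i := fun i hi => by
    rw [← Real.rpow_mul (hx i hi).le, div_mul_div_cancel₀ (by positivity : s + 1 ≠ 0),
      div_self hs.ne', Real.rpow_one]
  have h3 : ∀ i ∈ T, (x i ^ (-(s / (s + 1)))) ^ (s + 1) = x i ^ (-s) := fun i hi => by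
    rw [← Real.rpow_mul (hx i hi).le, neg_mul, div_mul_cancel₀ _ (by positivity)]
  simp only [sum_congr rfl h1, sum_congr rfl h2, sum_congr rfl h3, sum_const, nsmul_one,
    one_div, inv_div] at holder
  have hA : 0 < ∑ i ∈ T, x i := sum_pos hx hT
  have hB : 0 ≤ ∑ i ∈ T, x i ^ (-s) := sum_nonneg fun i hi => (Real.rpow_pos_of_pos (hx i hi) _).le
  calc (#T : ℝ) ^ (s + 1) * (∑ i ∈ T, x i) ^ (-s)
      ≤ ((∑ i ∈ T, x i) ^ (s / (s + 1)) * (∑ i ∈ T, x i ^ (-s)) ^ (s + 1)⁻¹) ^ (s + 1)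
          * (∑ i ∈ T, x i) ^ (-s) := by gcongr
    _ = ∑ i ∈ T, x i ^ (-s) := by
      rw [Real.mul_rpow (by positivity) (by positivity), ← Real.rpow_mul hA.le,
        ← Real.rpow_mul hB, div_mul_cancel₀ _ (by positivity), inv_mul_cancel₀ (by positivity),
        Real.rpow_one, mul_right_comm, ← Real.rpow_add hA, add_neg_cancel, Real.rpow_zero, one_mul]

theorem sub_eq_sum_range_sub {G : Type*} [AddCommGroup G] (z : ℤ → G) (i : ℤ) (k : ℕ) :
    z (i + k) - z i = ∑ j ∈ range k, (z (i + j + 1) - z (i + j)) := by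
  simpa [add_assoc] using (sum_range_sub (fun j : ℕ => z (i + j)) k).symm

theorem periodic_sub_of_map_add_eq_add {G : Type*} [AddCommGroup G] {z : ℤ → G} {N : ℕ} {c : G}
    (hper : ∀ i : ℤ, z (i + N) = z i + c) : Periodic (fun i => z (i + 1) - z i) N := fun i => by
  dsimp only
  rw [add_right_comm, hper, hper, add_sub_add_right_eq_sub]

section Configuration

variable {z : ℤ → ℝ} {N : ℕ}

theorem sum_Icc_one_sub_eq (hper : ∀ i : ℤ, z (i + N) = z i + 1) (k : ℕ) :
    ∑ i ∈ Icc (1 : ℤ) N, (z (i + k) - z i) = k := by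
  have hperiod : ∑ i ∈ Icc (1 : ℤ) N, (z (i + 1) - z i) = 1 := by
    have htelescope := sum_range_sub (fun j : ℕ => z (j + 1)) N
    push_cast at htelescope
    rw [sum_Icc_one_eq_sum_range, htelescope, add_comm, hper, add_sub_cancel_left]
  simp only [sub_eq_sum_range_sub z _ k]
  rw [(periodic_sub_of_map_add_eq_add hper).sum_Icc_one_sum_range_comp_add, hperiod,
    nsmul_one]

theorem sum_Icc_one_sub_rpow_neg_le (hper : ∀ i : ℤ, z (i + N) = z i + 1)
    (hsort : ∀ i : ℤ, z i < z (i + 1)) {s : ℝ} (hs : 0 < s) {k : ℕ} (hk : 1 ≤ k) :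
    ∑ i ∈ Icc (1 : ℤ) N, (z (i + k) - z i) ^ (-s) ≤
      (k : ℝ) ^ (-s) * ∑ i ∈ Icc (1 : ℤ) N, (z (i + 1) - z i) ^ (-s) := by
  have hk₀ : (0 : ℝ) < k := by exact_mod_cast hk
  have hgap : ∀ i j : ℤ, 0 < z (i + j + 1) - z (i + j) := fun i j => sub_pos.2 (hsort _)
  have hlocal : ∀ i : ℤ, (k : ℝ) ^ (s + 1) * (z (i + k) - z i) ^ (-s) ≤
      ∑ j ∈ range k, (z (i + j + 1) - z (i + j)) ^ (-s) := fun i => by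
    simpa [sub_eq_sum_range_sub z i k] using
      card_rpow_mul_sum_rpow_neg_le (range k) hs (fun j _ => hgap i j)
  have hperiod : Periodic (fun i => (z (i + 1) - z i) ^ (-s)) N :=
    (periodic_sub_of_map_add_eq_add hper).comp (· ^ (-s))
  have hsum : k * ((k : ℝ) ^ s * ∑ i ∈ Icc (1 : ℤ) N, (z (i + k) - z i) ^ (-s)) ≤
      k * ∑ i ∈ Icc (1 : ℤ) N, (z (i + 1) - z i) ^ (-s) := by
    calc k * ((k : ℝ) ^ s * ∑ i ∈ Icc (1 : ℤ) N, (z (i + k) - z i) ^ (-s))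
        = ∑ i ∈ Icc (1 : ℤ) N, (k : ℝ) ^ (s + 1) * (z (i + k) - z i) ^ (-s) := by
          rw [← mul_assoc, mul_sum, Real.rpow_add_one hk₀.ne', mul_comm (k : ℝ)]
      _ ≤ ∑ i ∈ Icc (1 : ℤ) N, ∑ j ∈ range k, (z (i + j + 1) - z (i + j)) ^ (-s) :=
          sum_le_sum fun i _ => hlocal i
      _ = k * ∑ i ∈ Icc (1 : ℤ) N, (z (i + 1) - z i) ^ (-s) := by
          rw [hperiod.sum_Icc_one_sum_range_comp_add, nsmul_eq_mul]
  rw [Real.rpow_neg hk₀.le, inv_mul_eq_div, le_div_iff₀' (by positivity)]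
  exact le_of_mul_le_mul_left hsum hk₀

end Configuration

theorem stmt15_general (s : ℝ) (hs : 0 < s) (N : ℕ) (hN : 2 ≤ N) (z : ℤ → ℝ)
    (hper : ∀ i : ℤ, z (i + (N : ℤ)) = z i + 1)
    (hsort : ∀ i : ℤ, z i < z (i + 1))
    (k : ℕ) (hk1 : 1 ≤ k) :
    s⁻¹ * (k : ℝ) ^ (-s) ≤ EtildeK s N z k ∧
      EtildeK s N z k ≤ (k : ℝ) ^ (-s) * EtildeK s N z 1 := by
  have hN₀ : (0 : ℝ) < N := by exact_mod_cast (by omega : 0 < N)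
  constructor
  · have hgap : ∀ i : ℤ, 0 < z (i + k) - z i :=
      fun i => sub_pos.2 (strictMono_int_of_lt_succ hsort (by omega))
    have hjensen := card_rpow_mul_sum_rpow_neg_le (Icc (1 : ℤ) N) hs fun i _ => hgap i
    rw [Int.card_Icc, add_sub_cancel_right, Int.toNat_natCast, sum_Icc_one_sub_eq hper] at hjensen
    calc s⁻¹ * (k : ℝ) ^ (-s)
        = 1 / (s * (N : ℝ) ^ (s + 1)) * ((N : ℝ) ^ (s + 1) * (k : ℝ) ^ (-s)) := by
          field_simp
      _ ≤ EtildeK s N z k := by unfold EtildeK; gcongr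
  · unfold EtildeK
    rw [mul_left_comm]
    gcongr
    simpa using sum_Icc_one_sub_rpow_neg_le hper hsort hs hk1

theorem stmt15 (s : ℝ) (hs : 0 < s) (N : ℕ) (hN : 2 ≤ N) (z : ℤ → ℝ)
    (hper : ∀ i : ℤ, z (i + (N : ℤ)) = z i + 1)
    (hsort : ∀ i : ℤ, z i < z (i + 1))
    (k : ℕ) (hk1 : 1 ≤ k) (hk2 : k ≤ N - 1) :
    s⁻¹ * (k : ℝ) ^ (-s) ≤ EtildeK s N z k ∧
      EtildeK s N z k ≤ (k : ℝ) ^ (-s) * EtildeK s N z 1 :=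
  stmt15_general s hs N hN z hper hsort k hk1
end
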